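/- arXiv:2211.11141 — 6 statements merged into one kernel-verified Lean document; each statement's English description precedes it below -/
import Mathlib

section
/- Let G=(V,E) be an undirected unweighted graph with three distinct terminals s1,s2,s3, and let Ĝ with target path p* be the augmented graph built from G. Let optA be the minimum size of an edge set disconnecting s1,s2,s3 pairwise in G and optB the minimum size of a Force Path Cut solution for (Ĝ,p*). For any Force Path Cut solution Ê' for (Ĝ,p*), define x = Ê'∩E if |Ê'| < M, and x = E otherwise. Then x disconnects s1,s2,s3 pairwise in G and | |x| − optA | ≤ | |Ê'| − optB |. -/
/-- `E'` is a Force Path Cut solution for the graph `G` with unit edge weights and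
target path `p`: it consists of edges of `G`, avoids the edges of `p`, and after
deleting it `p` is strictly shorter than every other path between its endpoints. -/
def FPCSol {V : Type*} (G : SimpleGraph V) {s t : V} (p : G.Walk s t)
    (E' : Set (Sym2 V)) : Prop :=
  E' ⊆ G.edgeSet ∧ (∀ e ∈ p.edges, e ∉ E') ∧
    ∀ q : (G.deleteEdges E').Walk s t, q.IsPath →
      q.mapLe (SimpleGraph.deleteEdges_le E') ≠ p → p.length < q.length

/-- `E'` disconnects the three terminals `s1, s2, s3` pairwise in `G`. -/
def Disconnects {V : Type*} (G : SimpleGraph V) (E' : Set (Sym2 V))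
    (s1 s2 s3 : V) : Prop :=
  ¬ (G.deleteEdges E').Reachable s1 s2 ∧ ¬ (G.deleteEdges E').Reachable s1 s3 ∧
    ¬ (G.deleteEdges E').Reachable s2 s3

/-- `Ghat` (a graph on `V ⊕ W`, where `W` is the type of new vertices) together with
the data of the added paths is the augmented graph built from `G` and the terminals
`s1, s2, s3` in the 3-Terminal Cut reduction: it consists of a copy of `G`, plus
`M+1` internally disjoint new paths of `N` hops from `s1` to `s2`, `M+1` internally
disjoint new paths of `N` hops from `s2` to `s3`, and one new path `pstar` of
`2N - 1` hops from `s1` to `s3`, all internal vertices being new and distinct. -/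
structure AugSpec {V W : Type*} (G : SimpleGraph V) (s1 s2 s3 : V) (N M : ℕ)
    (Ghat : SimpleGraph (V ⊕ W)) where
  P1 : Fin (M + 1) → Ghat.Walk (Sum.inl s1) (Sum.inl s2)
  P2 : Fin (M + 1) → Ghat.Walk (Sum.inl s2) (Sum.inl s3)
  pstar : Ghat.Walk (Sum.inl s1) (Sum.inl s3)
  P1_isPath : ∀ i, (P1 i).IsPath
  P2_isPath : ∀ i, (P2 i).IsPath
  pstar_isPath : pstar.IsPath
  P1_length : ∀ i, (P1 i).length = N
  P2_length : ∀ i, (P2 i).length = N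
  pstar_length : pstar.length = 2 * N - 1
  P1_new : ∀ i, ∀ v ∈ (P1 i).support,
    v ≠ Sum.inl s1 → v ≠ Sum.inl s2 → ∃ x : W, v = Sum.inr x
  P2_new : ∀ i, ∀ v ∈ (P2 i).support,
    v ≠ Sum.inl s2 → v ≠ Sum.inl s3 → ∃ x : W, v = Sum.inr x
  pstar_new : ∀ v ∈ pstar.support,
    v ≠ Sum.inl s1 → v ≠ Sum.inl s3 → ∃ x : W, v = Sum.inr x
  P1_disj : ∀ i j, i ≠ j → ∀ v ∈ (P1 i).support, v ∈ (P1 j).support →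
    v = Sum.inl s1 ∨ v = Sum.inl s2
  P2_disj : ∀ i j, i ≠ j → ∀ v ∈ (P2 i).support, v ∈ (P2 j).support →
    v = Sum.inl s2 ∨ v = Sum.inl s3
  P1_P2_disj : ∀ i j, ∀ v ∈ (P1 i).support, v ∈ (P2 j).support → v = Sum.inl s2
  P1_pstar_disj : ∀ i, ∀ v ∈ (P1 i).support, v ∈ pstar.support → v = Sum.inl s1
  P2_pstar_disj : ∀ i, ∀ v ∈ (P2 i).support, v ∈ pstar.support → v = Sum.inl s3
  adj_iff : ∀ x y : V ⊕ W, Ghat.Adj x y ↔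
    ((∃ u v : V, x = Sum.inl u ∧ y = Sum.inl v ∧ G.Adj u v) ∨
      (∃ i, s(x, y) ∈ (P1 i).edges) ∨ (∃ i, s(x, y) ∈ (P2 i).edges) ∨
      s(x, y) ∈ pstar.edges)

open SimpleGraph Walk

namespace Stmt6Aux

variable {X : Type*} {G : SimpleGraph X}

lemma Walk.getVert_cons_one {u v w : X} (h : G.Adj u v) (p : G.Walk v w) :
    (Walk.cons h p).getVert 1 = v := by
  simp [Walk.getVert_cons _ _ one_ne_zero]

lemma getVert_mem_support {u v : X} (p : G.Walk u v) (i : ℕ) :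
    p.getVert i ∈ p.support := by
  by_cases h : i ≤ p.length
  · exact Walk.mem_support_iff_exists_getVert.2 ⟨i, rfl, h⟩
  · rw [p.getVert_of_length_le (le_of_not_ge h)]
    exact p.end_mem_support

lemma edge_getVert_mem {u v : X} (p : G.Walk u v) {i : ℕ} (hi : i < p.length) :
    s(p.getVert i, p.getVert (i + 1)) ∈ p.edges := by
  induction p generalizing i with
  | nil => simp at hi
  | cons h q ih =>
    cases i with
    | zero =>
      simp [Walk.getVert_zero, Walk.getVert_cons_one]
    | succ n =>
      rw [Walk.getVert_cons_succ, Walk.getVert_cons_succ]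
      exact List.mem_cons_of_mem _ (ih (by simpa using hi))

lemma edges_eq_getVert {u v : X} (p : G.Walk u v) {e : Sym2 X} (he : e ∈ p.edges) :
    ∃ i < p.length, e = s(p.getVert i, p.getVert (i + 1)) := by
  induction p with
  | nil => simp at he
  | cons h q ih =>
    rw [Walk.edges_cons, List.mem_cons] at he
    rcases he with rfl | he
    · exact ⟨0, by simp, by simp [Walk.getVert_zero, Walk.getVert_cons_one]⟩
    · obtain ⟨i, hi, hei⟩ := ih he
      exact ⟨i + 1, by simpa using hi, by
        rw [Walk.getVert_cons_succ, Walk.getVert_cons_succ]; exact hei⟩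

lemma getVert_inj {u v : X} {p : G.Walk u v} (hp : p.IsPath) :
    ∀ {i j : ℕ}, i ≤ p.length → j ≤ p.length → p.getVert i = p.getVert j → i = j := by
  induction p with
  | nil => intro i j hi hj _; simp [Walk.length_nil] at hi hj; omega
  | cons h q ih =>
    intro i j hi hj hij
    match i, j with
    | 0, 0 => rfl
    | 0, (n+1) =>
      exfalso
      rw [Walk.getVert_zero, Walk.getVert_cons_succ] at hij
      exact ((Walk.cons_isPath_iff _ _).1 hp).2 (hij ▸ getVert_mem_support q n)
    | (n+1), 0 =>
      exfalso
      rw [Walk.getVert_zero, Walk.getVert_cons_succ] at hij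
      exact ((Walk.cons_isPath_iff _ _).1 hp).2 (hij ▸ getVert_mem_support q n)
    | (n+1), (m+1) =>
      rw [Walk.getVert_cons_succ, Walk.getVert_cons_succ] at hij
      have := ih ((Walk.cons_isPath_iff _ _).1 hp).1 (by simpa using hi) (by simpa using hj) hij
      omega


/-- In a walk with nodup support and length ≥ 2, the "chord" between the
endpoints is not an edge. -/
lemma endpoints_edge_not_mem {u v : X} {p : G.Walk u v}
    (hnd : p.support.Nodup) (hlen : 2 ≤ p.length) : s(u, v) ∉ p.edges := by
  induction p with
  | nil => simp
  | cons h q ih =>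
    intro hmem
    rw [Walk.edges_cons, List.mem_cons] at hmem
    rw [Walk.support_cons, List.nodup_cons] at hnd
    rcases hmem with heq | hmem
    · rw [Sym2.eq_iff] at heq
      rcases heq with ⟨-, rfl⟩ | ⟨rfl, rfl⟩
      · -- v is the second vertex, so q : Walk v v with length ≥ 1, support nodup
        have h1 : 1 ≤ q.length := by
          have := Walk.length_cons h q ▸ hlen; omega
        have : q.getVert 0 = q.getVert q.length := by
          rw [Walk.getVert_zero, Walk.getVert_length]
        have := getVert_inj (by exact (Walk.isPath_def q).2 hnd.2) (by omega)
          (le_refl _) this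
        omega
      · exact hnd.1 q.start_mem_support
    · exact hnd.1 (Walk.fst_mem_support_of_mem_edges q hmem)

/-- An edge of a path containing the start vertex is the first edge. -/
lemma edge_of_start {u v : X} {p : G.Walk u v} (hp : p.IsPath) {e : Sym2 X}
    (he : e ∈ p.edges) (hu : u ∈ e) : e = s(u, p.getVert 1) := by
  cases p with
  | nil => simp at he
  | cons h q =>
    rw [Walk.edges_cons, List.mem_cons] at he
    rcases he with rfl | he
    · rw [Walk.getVert_cons_one]
    · exfalso
      have hns : u ∉ q.support := ((Walk.cons_isPath_iff _ _).1 hp).2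
      induction e using Sym2.ind with
      | _ x y =>
        rw [Sym2.mem_iff] at hu
        rcases hu with rfl | rfl
        · exact hns (Walk.fst_mem_support_of_mem_edges q he)
        · exact hns (Walk.snd_mem_support_of_mem_edges q he)


lemma exists_edge_start {u v : X} {p : G.Walk u v} (hp : ¬ p.Nil) :
    ∃ e ∈ p.edges, u ∈ e := by
  cases p with
  | nil => simp at hp
  | cons h q => exact ⟨_, List.mem_cons_self, Sym2.mem_mk_left _ _⟩

lemma exists_edge_end {u v : X} {p : G.Walk u v} (hp : ¬ p.Nil) :
    ∃ e ∈ p.edges, v ∈ e := by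
  obtain ⟨e, he, hv⟩ := exists_edge_start (p := p.reverse) (by rwa [Walk.nil_iff_length_eq, Walk.length_reverse, ← Walk.nil_iff_length_eq])
  rw [Walk.edges_reverse, List.mem_reverse] at he
  exact ⟨e, he, hv⟩

lemma mem_edge_of_mem_support {u v w : X} {p : G.Walk u v} (hp : ¬ p.Nil)
    (hw : w ∈ p.support) : ∃ e ∈ p.edges, w ∈ e := by
  induction p with
  | nil => simp at hp
  | cons h q ih =>
    rw [Walk.support_cons, List.mem_cons] at hw
    rcases hw with rfl | hw
    · exact ⟨_, List.mem_cons_self, Sym2.mem_mk_left _ _⟩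
    · by_cases hq : q.Nil
      · cases q with
        | nil =>
          simp only [Walk.support_nil, List.mem_singleton] at hw
          subst hw
          exact ⟨_, List.mem_cons_self, Sym2.mem_mk_right _ _⟩
        | cons h' q' => simp at hq
      · obtain ⟨e, he, hwe⟩ := ih hq hw
        exact ⟨e, List.mem_cons_of_mem _ he, hwe⟩

/-- An internal vertex of a path lies on two distinct edges of the path. -/
lemma two_edges_of_internal {c d v : X} {q : G.Walk c d} (hq : q.IsPath)
    (hv : v ∈ q.support) (hvc : v ≠ c) (hvd : v ≠ d) :
    ∃ e₁ ∈ q.edges, ∃ e₂ ∈ q.edges, e₁ ≠ e₂ ∧ v ∈ e₁ ∧ v ∈ e₂ := by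
  induction q with
  | nil => simp only [Walk.support_nil, List.mem_singleton] at hv; exact absurd hv hvc
  | @cons a b d' hadj r ih =>
    rw [Walk.support_cons, List.mem_cons] at hv
    rcases hv with rfl | hv
    · exact absurd rfl hvc
    · -- q = cons hadj r, r : G.Walk b d', v ∈ r.support
      by_cases hvb : v = b
      · subst hvb
        -- first edge s(a, v), and since v ≠ d, r is non-nil, second edge
        have hrnil : ¬ r.Nil := by
          intro hnil
          cases r with
          | nil => exact hvd rfl
          | cons h' r' => simp at hnil
        obtain ⟨e, he, hve⟩ := exists_edge_start hrnil
        refine ⟨s(a, v), List.mem_cons_self, e, List.mem_cons_of_mem _ he, ?_,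
          Sym2.mem_mk_right _ _, hve⟩
        intro heq
        have ha : a ∈ e := heq ▸ Sym2.mem_mk_left _ _
        have : e = s(v, r.getVert 1) :=
          edge_of_start ((Walk.cons_isPath_iff _ _).1 hq).1 he hve
        rw [this, Sym2.mem_iff] at ha
        have hns : a ∉ r.support := ((Walk.cons_isPath_iff _ _).1 hq).2
        rcases ha with rfl | rfl
        · exact hns r.start_mem_support
        · exact hns (getVert_mem_support r 1)
      · obtain ⟨e₁, h₁, e₂, h₂, hne, hv₁, hv₂⟩ :=
          ih ((Walk.cons_isPath_iff _ _).1 hq).1 hv hvb hvd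
        exact ⟨e₁, List.mem_cons_of_mem _ h₁, e₂, List.mem_cons_of_mem _ h₂, hne, hv₁, hv₂⟩


/-- An internal vertex of a path has exactly two incident path edges. -/
lemma internal_two_edges {a b v : X} {p : G.Walk a b} (hp : p.IsPath)
    (hv : v ∈ p.support) (hva : v ≠ a) (hvb : v ≠ b) :
    ∃ u w, s(u, v) ∈ p.edges ∧ s(v, w) ∈ p.edges ∧ u ≠ w ∧
      ∀ e ∈ p.edges, v ∈ e → e = s(u, v) ∨ e = s(v, w) := by
  induction p with
  | nil => simp only [Walk.support_nil, List.mem_singleton] at hv; exact absurd hv hva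
  | @cons a c b' hadj r ih =>
    rw [Walk.support_cons, List.mem_cons] at hv
    rcases hv with rfl | hv
    · exact absurd rfl hva
    by_cases hvc : v = c
    · subst hvc
      have hrnil : ¬ r.Nil := by
        intro hnil
        cases r with
        | nil => exact hvb rfl
        | cons h' r' => simp at hnil
      refine ⟨a, r.getVert 1, ?_, ?_, ?_, ?_⟩
      · exact List.mem_cons_self
      · have : s(v, r.getVert 1) ∈ r.edges := by
          have := edge_getVert_mem r (i := 0)
            (by rw [Walk.nil_iff_length_eq] at hrnil; omega)
          simpa using this
        exact List.mem_cons_of_mem _ this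
      · intro heq
        have hns : a ∉ r.support := ((Walk.cons_isPath_iff _ _).1 hp).2
        exact hns (heq ▸ getVert_mem_support r 1)
      · intro e he hve
        rw [Walk.edges_cons, List.mem_cons] at he
        rcases he with rfl | he
        · left; rfl
        · right; exact edge_of_start ((Walk.cons_isPath_iff _ _).1 hp).1 he hve
    · obtain ⟨u, w, h1, h2, huw, hall⟩ :=
        ih ((Walk.cons_isPath_iff _ _).1 hp).1 hv hvc hvb
      refine ⟨u, w, List.mem_cons_of_mem _ h1, List.mem_cons_of_mem _ h2, huw, ?_⟩
      intro e he hve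
      rw [Walk.edges_cons, List.mem_cons] at he
      rcases he with rfl | he
      · exfalso
        rw [Sym2.mem_iff] at hve
        rcases hve with rfl | rfl
        · exact ((Walk.cons_isPath_iff _ _).1 hp).2 hv
        · exact hvc rfl
      · exact hall e he hve

/-- Two paths with the same endpoints, one containing all edges of the other and
no longer than it, are equal. -/
lemma eq_of_edges_subset {a b : X} {p q : G.Walk a b} (hp : p.IsPath) (hq : q.IsPath)
    (hsub : ∀ e ∈ p.edges, e ∈ q.edges) (hlen : q.length ≤ p.length) : q = p := by
  induction p with
  | nil =>
    cases q with
    | nil => rfl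
    | cons h r => simp at hlen
  | @cons a c b' hadj r ih =>
    have hfirst : s(a, c) ∈ q.edges := hsub _ (List.mem_cons_self)
    cases q with
    | nil => simp at hfirst
    | @cons _ c' _ hadj' r' =>
      have : s(a, c) = s(a, (Walk.cons hadj' r').getVert 1) :=
        edge_of_start hq hfirst (Sym2.mem_mk_left _ _)
      rw [Walk.getVert_cons_one, Sym2.eq_iff] at this
      have hcc : c = c' := by
        rcases this with ⟨-, h⟩ | ⟨h1, h2⟩
        · exact h
        · exact h2.trans h1
      subst hcc
      have hsub' : ∀ e ∈ r.edges, e ∈ r'.edges := by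
        intro e he
        have := hsub e (List.mem_cons_of_mem _ he)
        rw [Walk.edges_cons, List.mem_cons] at this
        rcases this with rfl | h
        · exact absurd (Walk.fst_mem_support_of_mem_edges r he)
            ((Walk.cons_isPath_iff _ _).1 hp).2
        · exact h
      have := ih ((Walk.cons_isPath_iff _ _).1 hp).1 ((Walk.cons_isPath_iff _ _).1 hq).1
        hsub' (by simpa using hlen)
      rw [this]


/-- The corridor lemma: if `p` is a path whose internal vertices only touch
edges of `p`, and the path `q` (whose endpoints are not internal to `p`)
visits an internal vertex of `p`, then every edge of `p` is an edge of `q`. -/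
lemma corridor {a b : X} {p : G.Walk a b} (hp : p.IsPath)
    (hiso : ∀ v ∈ p.support, v ≠ a → v ≠ b → ∀ y, G.Adj v y → s(v, y) ∈ p.edges)
    {c d : X} {q : G.Walk c d} (hq : q.IsPath)
    (hc : c ∈ p.support → c = a ∨ c = b) (hd : d ∈ p.support → d = a ∨ d = b)
    {v0 : X} (hv0p : v0 ∈ p.support) (hv0a : v0 ≠ a) (hv0b : v0 ≠ b)
    (hv0q : v0 ∈ q.support) :
    ∀ e ∈ p.edges, e ∈ q.edges := by
  classical
  have step : ∀ v ∈ p.support, v ≠ a → v ≠ b → v ∈ q.support →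
      ∀ e ∈ p.edges, v ∈ e → e ∈ q.edges := by
    intro v hvp hva hvb hvq e he hve
    obtain ⟨u, w, h1, h2, huw, hall⟩ := internal_two_edges hp hvp hva hvb
    have hvc : v ≠ c := by
      intro h; subst h
      rcases hc hvp with rfl | rfl
      · exact hva rfl
      · exact hvb rfl
    have hvd : v ≠ d := by
      intro h; subst h
      rcases hd hvp with rfl | rfl
      · exact hva rfl
      · exact hvb rfl
    obtain ⟨e₁, he₁, e₂, he₂, hne, hv₁, hv₂⟩ := two_edges_of_internal hq hvq hvc hvd
    have key : ∀ e' ∈ q.edges, v ∈ e' → e' = s(u, v) ∨ e' = s(v, w) := by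
      intro e' he' hve'
      induction e' using Sym2.ind with
      | _ x y =>
        rw [Sym2.mem_iff] at hve'
        rcases hve' with h | h
        · subst h
          exact hall _ (hiso v hvp hva hvb y (q.adj_of_mem_edges he'))
            (Sym2.mem_mk_left _ _)
        · subst h
          have hpe : s(v, x) ∈ p.edges :=
            hiso v hvp hva hvb x (q.adj_of_mem_edges he').symm
          have h3 := hall _ hpe (Sym2.mem_mk_left _ _)
          have hsw : s(x, v) = s(v, x) := Sym2.eq_swap
          rw [hsw]
          exact h3
    have hboth : s(u, v) ∈ q.edges ∧ s(v, w) ∈ q.edges := by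
      rcases key e₁ he₁ hv₁ with h1' | h1' <;> rcases key e₂ he₂ hv₂ with h2' | h2'
      · exact absurd (h1'.trans h2'.symm) hne
      · exact ⟨h1' ▸ he₁, h2' ▸ he₂⟩
      · exact ⟨h2' ▸ he₂, h1' ▸ he₁⟩
      · exact absurd (h1'.trans h2'.symm) hne
    rcases hall e he hve with rfl | rfl
    · exact hboth.1
    · exact hboth.2
  obtain ⟨i0, hgv, hi0le⟩ := Walk.mem_support_iff_exists_getVert.1 hv0p
  set L := p.length with hLdef
  have hi01 : 1 ≤ i0 := by
    rcases Nat.eq_zero_or_pos i0 with rfl | h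
    · rw [Walk.getVert_zero] at hgv; exact absurd hgv.symm hv0a
    · exact h
  have hi0L : i0 ≤ L - 1 := by
    rcases Nat.lt_or_ge i0 L with h | h
    · omega
    · exfalso
      have : i0 = L := le_antisymm hi0le h
      rw [this, Walk.getVert_length] at hgv
      exact hv0b hgv.symm
  have hL2 : 1 ≤ L := by omega
  have hint : ∀ j, 1 ≤ j → j ≤ L - 1 → p.getVert j ≠ a ∧ p.getVert j ≠ b := by
    intro j hj1 hj2
    constructor
    · intro h
      have : j = 0 := getVert_inj hp (by omega) (Nat.zero_le _)
        (by rw [h, Walk.getVert_zero])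
      omega
    · intro h
      have : j = L := getVert_inj hp (by omega) le_rfl
        (by rw [h, Walk.getVert_length])
      omega
  have push : ∀ i, 1 ≤ i → i ≤ L - 1 → p.getVert i ∈ q.support →
      p.getVert (i - 1) ∈ q.support ∧ p.getVert (i + 1) ∈ q.support := by
    intro i h1 h2 hmem
    obtain ⟨hna, hnb⟩ := hint i h1 h2
    have he₁ : s(p.getVert (i - 1), p.getVert i) ∈ p.edges := by
      have := edge_getVert_mem p (i := i - 1) (by omega)
      have hrw : i - 1 + 1 = i := by omega
      rwa [hrw] at this
    have he₂ : s(p.getVert i, p.getVert (i + 1)) ∈ p.edges :=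
      edge_getVert_mem p (by omega)
    have hq₁ := step _ (getVert_mem_support p i) hna hnb hmem _ he₁
      (Sym2.mem_mk_right _ _)
    have hq₂ := step _ (getVert_mem_support p i) hna hnb hmem _ he₂
      (Sym2.mem_mk_left _ _)
    exact ⟨Walk.fst_mem_support_of_mem_edges q hq₁,
      Walk.snd_mem_support_of_mem_edges q hq₂⟩
  have down : ∀ k, 1 ≤ i0 - k → p.getVert (i0 - k) ∈ q.support := by
    intro k
    induction k with
    | zero => intro _; simpa [hgv] using hv0q
    | succ n ih =>
      intro h
      have h' : 1 ≤ i0 - n := by omega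
      have := (push (i0 - n) h' (by omega) (ih h')).1
      have hrw : i0 - n - 1 = i0 - (n + 1) := by omega
      rwa [hrw] at this
  have up : ∀ k, i0 + k ≤ L - 1 → p.getVert (i0 + k) ∈ q.support := by
    intro k
    induction k with
    | zero => intro _; simpa [hgv] using hv0q
    | succ n ih =>
      intro h
      have := (push (i0 + n) (by omega) (by omega) (ih (by omega))).2
      have hrw : i0 + n + 1 = i0 + (n + 1) := by omega
      rwa [hrw] at this
  have interior_mem : ∀ i, 1 ≤ i → i ≤ L - 1 → p.getVert i ∈ q.support := by
    intro i h1 h2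
    rcases Nat.le_total i i0 with h | h
    · have := down (i0 - i) (by omega)
      have hrw : i0 - (i0 - i) = i := by omega
      rwa [hrw] at this
    · have := up (i - i0) (by omega)
      have hrw : i0 + (i - i0) = i := by omega
      rwa [hrw] at this
  intro e he
  obtain ⟨i, hi, rfl⟩ := edges_eq_getVert p he
  rcases Nat.eq_zero_or_pos i with rfl | hpos
  · obtain ⟨hna, hnb⟩ := hint 1 le_rfl (by omega)
    exact step _ (getVert_mem_support p 1) hna hnb (interior_mem 1 le_rfl (by omega))
      _ he (Sym2.mem_mk_right _ _)
  · obtain ⟨hna, hnb⟩ := hint i hpos (by omega)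
    exact step _ (getVert_mem_support p i) hna hnb (interior_mem i hpos (by omega))
      _ he (Sym2.mem_mk_left _ _)


lemma edges_mapLe {Y : Type*} {G G' : SimpleGraph Y} (h : G ≤ G') {u v : Y}
    (p : G.Walk u v) : (p.mapLe h).edges = p.edges := by
  simp only [Walk.mapLe, Walk.edges_map]
  have hid : Sym2.map ⇑(SimpleGraph.Hom.ofLE h) = id := by
    funext e
    induction e using Sym2.ind with
    | _ x y => simp
  rw [hid, List.map_id]

lemma pigeon {α : Type*} {M : ℕ} (P : Fin (M + 1) → List α)
    (hdisj : ∀ i j e, e ∈ P i → e ∈ P j → i = j) (S : Set α) (hfin : S.Finite)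
    (hcard : S.ncard ≤ M) : ∃ i, ∀ e ∈ P i, e ∉ S := by
  classical
  by_contra h
  push_neg at h
  choose f hf1 hf2 using h
  have hinj : Function.Injective f := fun i j hij =>
    hdisj i j (f i) (hf1 i) (hij ▸ hf1 j)
  have hsub : ↑(Finset.univ.image f) ⊆ S := by
    intro e he
    simp only [Finset.coe_image, Finset.coe_univ, Set.image_univ, Set.mem_range] at he
    obtain ⟨i, rfl⟩ := he
    exact hf2 i
  have := Set.ncard_le_ncard hsub hfin
  rw [Set.ncard_coe_finset, Finset.card_image_of_injective _ hinj,
    Finset.card_univ, Fintype.card_fin] at this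
  omega




section Aug

variable {V W : Type*} {G : SimpleGraph V} {s1 s2 s3 : V} {N M : ℕ}
  {Ghat : SimpleGraph (V ⊕ W)} (A : AugSpec G s1 s2 s3 N M Ghat)

/-- Any vertex on `P1 i` which is an `inl` must be one of the endpoints. -/
lemma P1_inl_cases (i : Fin (M + 1)) {u : V} (h : Sum.inl u ∈ (A.P1 i).support) :
    (Sum.inl u : V ⊕ W) = Sum.inl s1 ∨ (Sum.inl u : V ⊕ W) = Sum.inl s2 := by
  by_cases h1 : (Sum.inl u : V ⊕ W) = Sum.inl s1
  · exact Or.inl h1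
  by_cases h2 : (Sum.inl u : V ⊕ W) = Sum.inl s2
  · exact Or.inr h2
  obtain ⟨x, hx⟩ := A.P1_new i _ h h1 h2
  exact absurd hx (by simp)

lemma P2_inl_cases (i : Fin (M + 1)) {u : V} (h : Sum.inl u ∈ (A.P2 i).support) :
    (Sum.inl u : V ⊕ W) = Sum.inl s2 ∨ (Sum.inl u : V ⊕ W) = Sum.inl s3 := by
  by_cases h1 : (Sum.inl u : V ⊕ W) = Sum.inl s2
  · exact Or.inl h1
  by_cases h2 : (Sum.inl u : V ⊕ W) = Sum.inl s3
  · exact Or.inr h2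
  obtain ⟨x, hx⟩ := A.P2_new i _ h h1 h2
  exact absurd hx (by simp)

lemma pstar_inl_cases {u : V} (h : Sum.inl u ∈ A.pstar.support) :
    (Sum.inl u : V ⊕ W) = Sum.inl s1 ∨ (Sum.inl u : V ⊕ W) = Sum.inl s3 := by
  by_cases h1 : (Sum.inl u : V ⊕ W) = Sum.inl s1
  · exact Or.inl h1
  by_cases h2 : (Sum.inl u : V ⊕ W) = Sum.inl s3
  · exact Or.inr h2
  obtain ⟨x, hx⟩ := A.pstar_new _ h h1 h2
  exact absurd hx (by simp)

lemma s3_not_mem_P1 (h13 : s1 ≠ s3) (h23 : s2 ≠ s3) (i : Fin (M + 1)) :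
    (Sum.inl s3 : V ⊕ W) ∉ (A.P1 i).support := by
  intro h
  rcases P1_inl_cases A i h with h' | h' <;> simp_all

lemma s1_not_mem_P2 (h12 : s1 ≠ s2) (h13 : s1 ≠ s3) (i : Fin (M + 1)) :
    (Sum.inl s1 : V ⊕ W) ∉ (A.P2 i).support := by
  intro h
  rcases P2_inl_cases A i h with h' | h' <;> simp_all

lemma s2_not_mem_pstar (h12 : s1 ≠ s2) (h23 : s2 ≠ s3) :
    (Sum.inl s2 : V ⊕ W) ∉ A.pstar.support := by
  intro h
  rcases pstar_inl_cases A h with h' | h' <;> simp_all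

lemma walk_edge_not_both_endpoints {Y : Type*} {H : SimpleGraph Y} {a b : Y}
    {p : H.Walk a b} (hp : p.IsPath) (hlen : 2 <= p.length) {x y : Y}
    (he : s(x, y) ∈ p.edges) (hx : x = a ∨ x = b) (hy : y = a ∨ y = b) : False := by
  have hne : x ≠ y := (p.adj_of_mem_edges he).ne
  rcases hx with rfl | rfl <;> rcases hy with rfl | rfl
  · exact hne rfl
  · exact endpoints_edge_not_mem hp.support_nodup hlen he
  · rw [Sym2.eq_swap] at he
    exact endpoints_edge_not_mem hp.support_nodup hlen he
  · exact hne rfl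

/-- Every edge of `P1 i` has an `inr` endpoint. -/
lemma P1_edge_inr (hN : 2 ≤ N) (i : Fin (M + 1)) {e : Sym2 (V ⊕ W)}
    (he : e ∈ (A.P1 i).edges) : ∃ w : W, Sum.inr w ∈ e := by
  induction e using Sym2.ind with
  | _ x y =>
    rcases x with u | w
    case inr => exact ⟨w, Sym2.mem_mk_left _ _⟩
    rcases y with v | w
    case inr => exact ⟨w, Sym2.mem_mk_right _ _⟩
    exact (walk_edge_not_both_endpoints (A.P1_isPath i)
      (by rw [A.P1_length i]; exact hN) he
      (P1_inl_cases A i ((A.P1 i).fst_mem_support_of_mem_edges he))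
      (P1_inl_cases A i ((A.P1 i).snd_mem_support_of_mem_edges he))).elim

lemma P2_edge_inr (hN : 2 ≤ N) (i : Fin (M + 1)) {e : Sym2 (V ⊕ W)}
    (he : e ∈ (A.P2 i).edges) : ∃ w : W, Sum.inr w ∈ e := by
  induction e using Sym2.ind with
  | _ x y =>
    rcases x with u | w
    case inr => exact ⟨w, Sym2.mem_mk_left _ _⟩
    rcases y with v | w
    case inr => exact ⟨w, Sym2.mem_mk_right _ _⟩
    exact (walk_edge_not_both_endpoints (A.P2_isPath i)
      (by rw [A.P2_length i]; exact hN) he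
      (P2_inl_cases A i ((A.P2 i).fst_mem_support_of_mem_edges he))
      (P2_inl_cases A i ((A.P2 i).snd_mem_support_of_mem_edges he))).elim

lemma pstar_edge_inr (hN : 2 ≤ N) {e : Sym2 (V ⊕ W)}
    (he : e ∈ A.pstar.edges) : ∃ w : W, Sum.inr w ∈ e := by
  induction e using Sym2.ind with
  | _ x y =>
    rcases x with u | w
    case inr => exact ⟨w, Sym2.mem_mk_left _ _⟩
    rcases y with v | w
    case inr => exact ⟨w, Sym2.mem_mk_right _ _⟩
    exact (walk_edge_not_both_endpoints A.pstar_isPath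
      (by rw [A.pstar_length]; omega) he
      (pstar_inl_cases A (A.pstar.fst_mem_support_of_mem_edges he))
      (pstar_inl_cases A (A.pstar.snd_mem_support_of_mem_edges he))).elim


/-- Interior vertices of `pstar` only touch edges of `pstar`. -/
lemma iso_pstar (hN : 2 ≤ N) :
    ∀ v ∈ A.pstar.support, v ≠ Sum.inl s1 → v ≠ Sum.inl s3 →
      ∀ y, Ghat.Adj v y → s(v, y) ∈ A.pstar.edges := by
  intro v hv h1 h3 y hadj
  obtain ⟨w, rfl⟩ := A.pstar_new v hv h1 h3
  rcases (A.adj_iff _ _).1 hadj with ⟨u', v', h', -⟩ | ⟨i, h'⟩ | ⟨i, h'⟩ | h'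
  · exact absurd h' (by simp)
  · have := A.P1_pstar_disj i _ ((A.P1 i).fst_mem_support_of_mem_edges h') hv
    exact absurd this (by simp)
  · have := A.P2_pstar_disj i _ ((A.P2 i).fst_mem_support_of_mem_edges h') hv
    exact absurd this (by simp)
  · exact h'

/-- Interior vertices of `P1 i` only touch edges of `P1 i`. -/
lemma iso_P1 (hN : 2 ≤ N) (i : Fin (M + 1)) :
    ∀ v ∈ (A.P1 i).support, v ≠ Sum.inl s1 → v ≠ Sum.inl s2 →
      ∀ y, Ghat.Adj v y → s(v, y) ∈ (A.P1 i).edges := by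
  intro v hv h1 h2 y hadj
  obtain ⟨w, rfl⟩ := A.P1_new i v hv h1 h2
  rcases (A.adj_iff _ _).1 hadj with ⟨u', v', h', -⟩ | ⟨j, h'⟩ | ⟨j, h'⟩ | h'
  · exact absurd h' (by simp)
  · by_cases hji : j = i
    · exact hji ▸ h'
    · have := A.P1_disj j i hji _ ((A.P1 j).fst_mem_support_of_mem_edges h') hv
      rcases this with h'' | h'' <;> exact absurd h'' (by simp)
  · have := A.P1_P2_disj i j _ hv ((A.P2 j).fst_mem_support_of_mem_edges h')
    exact absurd this (by simp)
  · have := A.P1_pstar_disj i _ hv (A.pstar.fst_mem_support_of_mem_edges h')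
    exact absurd this (by simp)

/-- Interior vertices of `P2 i` only touch edges of `P2 i`. -/
lemma iso_P2 (hN : 2 ≤ N) (i : Fin (M + 1)) :
    ∀ v ∈ (A.P2 i).support, v ≠ Sum.inl s2 → v ≠ Sum.inl s3 →
      ∀ y, Ghat.Adj v y → s(v, y) ∈ (A.P2 i).edges := by
  intro v hv h2 h3 y hadj
  obtain ⟨w, rfl⟩ := A.P2_new i v hv h2 h3
  rcases (A.adj_iff _ _).1 hadj with ⟨u', v', h', -⟩ | ⟨j, h'⟩ | ⟨j, h'⟩ | h'
  · exact absurd h' (by simp)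
  · have := A.P1_P2_disj j i _ ((A.P1 j).fst_mem_support_of_mem_edges h') hv
    exact absurd this (by simp)
  · by_cases hji : j = i
    · exact hji ▸ h'
    · have := A.P2_disj j i hji _ ((A.P2 j).fst_mem_support_of_mem_edges h') hv
      rcases this with h'' | h'' <;> exact absurd h'' (by simp)
  · have := A.P2_pstar_disj i _ hv (A.pstar.fst_mem_support_of_mem_edges h')
    exact absurd this (by simp)

lemma edge_both_supports {Y : Type*} {H : SimpleGraph Y} {a b a' b' : Y}
    {p : H.Walk a b} {p' : H.Walk a' b'} {e : Sym2 Y} (he : e ∈ p.edges)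
    (he' : e ∈ p'.edges)
    (hcom : ∀ v ∈ p.support, v ∈ p'.support → v = a ∨ v = b)
    (hp : p.IsPath) (hlen : 2 ≤ p.length) : False := by
  induction e using Sym2.ind with
  | _ x y =>
    have hx := hcom x (p.fst_mem_support_of_mem_edges he)
      (p'.fst_mem_support_of_mem_edges he')
    have hy := hcom y (p.snd_mem_support_of_mem_edges he)
      (p'.snd_mem_support_of_mem_edges he')
    exact walk_edge_not_both_endpoints hp hlen he hx hy

lemma edge_both_supports' {Y : Type*} {H : SimpleGraph Y} {a b a' b' c : Y}
    {p : H.Walk a b} {p' : H.Walk a' b'} {e : Sym2 Y} (he : e ∈ p.edges)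
    (he' : e ∈ p'.edges)
    (hcom : ∀ v ∈ p.support, v ∈ p'.support → v = c) : False := by
  induction e using Sym2.ind with
  | _ x y =>
    have hx := hcom x (p.fst_mem_support_of_mem_edges he)
      (p'.fst_mem_support_of_mem_edges he')
    have hy := hcom y (p.snd_mem_support_of_mem_edges he)
      (p'.snd_mem_support_of_mem_edges he')
    exact (p.adj_of_mem_edges he).ne (hx.trans hy.symm)

lemma P1_edges_disj (hN : 2 ≤ N) {i j : Fin (M + 1)} {e : Sym2 (V ⊕ W)}
    (hi : e ∈ (A.P1 i).edges) (hj : e ∈ (A.P1 j).edges) : i = j := by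
  by_contra hij
  exact edge_both_supports hi hj (A.P1_disj i j hij) (A.P1_isPath i)
    (by rw [A.P1_length i]; exact hN)

lemma P2_edges_disj (hN : 2 ≤ N) {i j : Fin (M + 1)} {e : Sym2 (V ⊕ W)}
    (hi : e ∈ (A.P2 i).edges) (hj : e ∈ (A.P2 j).edges) : i = j := by
  by_contra hij
  exact edge_both_supports hi hj (A.P2_disj i j hij) (A.P2_isPath i)
    (by rw [A.P2_length i]; exact hN)

lemma P1_P2_edges_disj {i j : Fin (M + 1)} {e : Sym2 (V ⊕ W)}
    (hi : e ∈ (A.P1 i).edges) (hj : e ∈ (A.P2 j).edges) : False :=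
  edge_both_supports' hi hj (A.P1_P2_disj i j)

lemma P1_pstar_edges_disj {i : Fin (M + 1)} {e : Sym2 (V ⊕ W)}
    (hi : e ∈ (A.P1 i).edges) (hj : e ∈ A.pstar.edges) : False :=
  edge_both_supports' hi hj (A.P1_pstar_disj i)

lemma P2_pstar_edges_disj {i : Fin (M + 1)} {e : Sym2 (V ⊕ W)}
    (hi : e ∈ (A.P2 i).edges) (hj : e ∈ A.pstar.edges) : False :=
  edge_both_supports' hi hj (A.P2_pstar_disj i)

include A in
lemma inl_inl_adj (hN : 2 ≤ N) {u v : V} :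
    Ghat.Adj (Sum.inl u) (Sum.inl v) ↔ G.Adj u v := by
  constructor
  · intro h
    rcases (A.adj_iff _ _).1 h with ⟨u', v', hu, hv, h'⟩ | ⟨i, h'⟩ | ⟨i, h'⟩ | h'
    · rw [Sum.inl.injEq] at hu hv
      exact hu ▸ hv ▸ h'
    · obtain ⟨w, hw⟩ := P1_edge_inr A hN i h'
      rw [Sym2.mem_iff] at hw
      rcases hw with h'' | h'' <;> simp at h''
    · obtain ⟨w, hw⟩ := P2_edge_inr A hN i h'
      rw [Sym2.mem_iff] at hw
      rcases hw with h'' | h'' <;> simp at h''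
    · obtain ⟨w, hw⟩ := pstar_edge_inr A hN h'
      rw [Sym2.mem_iff] at hw
      rcases hw with h'' | h'' <;> simp at h''
  · intro h
    exact (A.adj_iff _ _).2 (Or.inl ⟨u, v, rfl, rfl, h⟩)

include A in
lemma ghat_edgeSet_finite [Fintype V] [DecidableEq V] : Ghat.edgeSet.Finite := by
  have hsub : Ghat.edgeSet ⊆ (Sym2.map Sum.inl '' G.edgeSet) ∪
      ((⋃ i, {e | e ∈ (A.P1 i).edges}) ∪ ((⋃ i, {e | e ∈ (A.P2 i).edges}) ∪
        {e | e ∈ A.pstar.edges})) := by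
    intro e he
    induction e using Sym2.ind with
    | _ x y =>
      rw [SimpleGraph.mem_edgeSet] at he
      rcases (A.adj_iff _ _).1 he with ⟨u', v', rfl, rfl, h'⟩ | ⟨i, h'⟩ | ⟨i, h'⟩ | h'
      · exact Or.inl ⟨s(u', v'), h', (Sym2.map_pair_eq _ _ _)⟩
      · exact Or.inr (Or.inl (Set.mem_iUnion.2 ⟨i, h'⟩))
      · exact Or.inr (Or.inr (Or.inl (Set.mem_iUnion.2 ⟨i, h'⟩)))
      · exact Or.inr (Or.inr (Or.inr h'))
  refine Set.Finite.subset ?_ hsub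
  refine Set.Finite.union ((Set.toFinite _).image _) (Set.Finite.union ?_
    (Set.Finite.union ?_ (List.finite_toSet _)))
  · exact Set.finite_iUnion fun i => List.finite_toSet _
  · exact Set.finite_iUnion fun i => List.finite_toSet _

include A in
lemma pullback (hN : 2 ≤ N) (E'' : Set (Sym2 V)) :
    ∀ {x y : V ⊕ W} (r : Ghat.Walk x y) {u v : V}, x = Sum.inl u → y = Sum.inl v →
    (∀ z ∈ r.support, ∃ w : V, z = Sum.inl w) →
    (∀ e ∈ r.edges, e ∉ Sym2.map Sum.inl '' E'') →
    ∃ γ : G.Walk u v, ∀ e ∈ γ.edges, e ∉ E'' := by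
  intro x y r
  induction r with
  | nil =>
    intro u v hx hy _ _
    rw [hx, Sum.inl.injEq] at hy
    subst hy
    exact ⟨Walk.nil, by simp⟩
  | @cons α β ω hadj r ih =>
    intro u v hx hy hsupp hedges
    subst hx
    obtain ⟨u', hz⟩ := hsupp β (by
      rw [Walk.support_cons]
      exact List.mem_cons_of_mem _ r.start_mem_support)
    subst hz
    have hG : G.Adj u u' := (inl_inl_adj A hN).1 hadj
    have hfe : s(u, u') ∉ E'' := by
      intro hmem
      exact hedges _ (List.mem_cons_self) ⟨s(u, u'), hmem, Sym2.map_pair_eq _ _ _⟩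
    obtain ⟨γ', hγ'⟩ := ih rfl hy
      (fun z hz => hsupp z (by rw [Walk.support_cons]; exact List.mem_cons_of_mem _ hz))
      (fun e he => hedges e (List.mem_cons_of_mem _ he))
    refine ⟨Walk.cons hG γ', ?_⟩
    intro e he
    rw [Walk.edges_cons, List.mem_cons] at he
    rcases he with rfl | he
    · exact hfe
    · exact hγ' e he

include A in
lemma pushforward (hN : 2 ≤ N) (S : Set (Sym2 (V ⊕ W))) :
    ∀ {u v : V} (γ : G.Walk u v), (∀ e ∈ γ.edges, Sym2.map Sum.inl e ∉ S) →
    ∃ δ : (Ghat.deleteEdges S).Walk (Sum.inl u) (Sum.inl v),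
      δ.length = γ.length ∧ ∀ e ∈ δ.edges, ∃ e₀ ∈ γ.edges, e = Sym2.map Sum.inl e₀ := by
  intro u v γ
  induction γ with
  | nil => intro _; exact ⟨Walk.nil, by simp, by simp⟩
  | @cons α β ω hadj γ' ih =>
    intro hedges
    obtain ⟨δ', hlen, hδ'⟩ := ih (fun e he => hedges e (List.mem_cons_of_mem _ he))
    have hadj' : (Ghat.deleteEdges S).Adj (Sum.inl α) (Sum.inl β) := by
      rw [SimpleGraph.deleteEdges_adj]
      refine ⟨(inl_inl_adj A hN).2 hadj, ?_⟩
      have h0 := hedges s(α, β) (by rw [Walk.edges_cons]; exact List.mem_cons_self)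
      rw [Sym2.map_pair_eq] at h0
      exact h0
    refine ⟨Walk.cons hadj' δ', by simp [hlen], ?_⟩
    intro e he
    rw [Walk.edges_cons, List.mem_cons] at he
    rcases he with rfl | he
    · exact ⟨s(α, β), List.mem_cons_self, (Sym2.map_pair_eq _ _ _).symm⟩
    · obtain ⟨e₀, h1, h2⟩ := hδ' e he
      exact ⟨e₀, List.mem_cons_of_mem _ h1, h2⟩

/-- A `Ghat`-edge containing an `inr` vertex belongs to one of the added paths. -/
lemma inr_edge {e : Sym2 (V ⊕ W)} (he : e ∈ Ghat.edgeSet) {w : W}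
    (hw : Sum.inr w ∈ e) :
    (∃ i, e ∈ (A.P1 i).edges) ∨ (∃ i, e ∈ (A.P2 i).edges) ∨ e ∈ A.pstar.edges := by
  induction e using Sym2.ind with
  | _ x y =>
    rw [SimpleGraph.mem_edgeSet] at he
    rcases (A.adj_iff _ _).1 he with ⟨u', v', rfl, rfl, h'⟩ | h' | h' | h'
    · rw [Sym2.mem_iff] at hw
      rcases hw with h'' | h'' <;> simp at h''
    · exact Or.inl h'
    · exact Or.inr (Or.inl h')
    · exact Or.inr (Or.inr h')


lemma mem_support_of_edge {Y : Type*} {H : SimpleGraph Y} {a b : Y} {p : H.Walk a b}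
    {e : Sym2 Y} (he : e ∈ p.edges) {z : Y} (hz : z ∈ e) : z ∈ p.support := by
  induction e using Sym2.ind with
  | _ x y =>
    rcases Sym2.mem_iff.1 hz with rfl | rfl
    exacts [p.fst_mem_support_of_mem_edges he, p.snd_mem_support_of_mem_edges he]

lemma count_two {Y : Type*} {H : SimpleGraph Y} {a b : Y} {q : H.Walk a b}
    (hq : q.IsPath) (l1 l2 : List (Sym2 Y)) (h1 : l1.Nodup) (h2 : l2.Nodup)
    (hd : ∀ e ∈ l1, e ∉ l2) (hs1 : ∀ e ∈ l1, e ∈ q.edges)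
    (hs2 : ∀ e ∈ l2, e ∈ q.edges) : l1.length + l2.length ≤ q.length := by
  classical
  have hnd : (l1 ++ l2).Nodup := by
    rw [List.nodup_append]
    exact ⟨h1, h2, fun a ha b hb hab => by subst hab; exact hd a ha hb⟩
  have hsub : (l1 ++ l2) ⊆ q.edges := by
    intro e he
    rw [List.mem_append] at he
    rcases he with he | he
    exacts [hs1 e he, hs2 e he]
  have := (hnd.subperm hsub).length_le
  rw [List.length_append, q.length_edges] at this
  exact this

include A in
lemma no_corridor_pullback (hN : 2 ≤ N) {E'' : Set (Sym2 V)} {α β : V}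
    (r : Ghat.Walk (Sum.inl α) (Sum.inl β))
    (hr : ∀ e ∈ r.edges, e ∉ Sym2.map Sum.inl '' E'')
    (hP1 : ∀ i, ∀ v ∈ r.support, v ∈ (A.P1 i).support →
      v = Sum.inl s1 ∨ v = Sum.inl s2)
    (hP2 : ∀ i, ∀ v ∈ r.support, v ∈ (A.P2 i).support →
      v = Sum.inl s2 ∨ v = Sum.inl s3)
    (hps : ∀ v ∈ r.support, v ∈ A.pstar.support →
      v = Sum.inl s1 ∨ v = Sum.inl s3) :
    (G.deleteEdges E'').Reachable α β := by
  have hall : ∀ z ∈ r.support, ∃ w : V, z = Sum.inl w := by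
    intro z hz
    rcases z with u | w
    · exact ⟨u, rfl⟩
    exfalso
    have hzm := hz
    obtain ⟨e, he, hwe⟩ : ∃ e ∈ r.edges, (Sum.inr w : V ⊕ W) ∈ e := by
      cases r with
      | nil => rw [Walk.support_nil] at hz; simp at hz
      | cons h r' =>
        exact mem_edge_of_mem_support (by
          rw [Walk.not_nil_iff_lt_length, Walk.length_cons]; omega) hz
    have heS : e ∈ Ghat.edgeSet := Walk.edges_subset_edgeSet _ he
    rcases inr_edge A heS hwe with ⟨i, hei⟩ | ⟨i, hei⟩ | hei
    · rcases hP1 i _ hzm (mem_support_of_edge hei hwe) with h' | h' <;> simp at h'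
    · rcases hP2 i _ hzm (mem_support_of_edge hei hwe) with h' | h' <;> simp at h'
    · rcases hps _ hzm (mem_support_of_edge hei hwe) with h' | h' <;> simp at h'
  obtain ⟨γ, hγ⟩ := pullback A hN E'' r rfl rfl hall hr
  exact ⟨γ.toDeleteEdges E'' hγ⟩

include A in
/-- The key structural lemma: any `s1`–`s3` path in the augmented graph which
avoids the deleted (copied) edges and differs from `pstar` is longer than
`2N - 1`, provided the deleted edges disconnect the terminals in `G`. -/
lemma struct (hN : 2 ≤ N) (h12 : s1 ≠ s2) (h13 : s1 ≠ s3) (h23 : s2 ≠ s3)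
    {E'' : Set (Sym2 V)} (hdis : Disconnects G E'' s1 s2 s3)
    (q : Ghat.Walk (Sum.inl s1) (Sum.inl s3)) (hq : q.IsPath)
    (hqD : ∀ e ∈ q.edges, e ∉ Sym2.map Sum.inl '' E'')
    (hne : q ≠ A.pstar) : 2 * N - 1 < q.length := by
  classical
  rcases Classical.em (∃ v ∈ q.support, v ∈ A.pstar.support ∧ v ≠ Sum.inl s1 ∧
      v ≠ Sum.inl s3) with hA | hA
  · obtain ⟨v0, hv0q, hv0p, hv0a, hv0b⟩ := hA
    have hsub : ∀ e ∈ A.pstar.edges, e ∈ q.edges :=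
      corridor A.pstar_isPath (iso_pstar A hN) hq
        (fun _ => Or.inl rfl) (fun _ => Or.inr rfl) hv0p hv0a hv0b hv0q
    by_contra hlen
    push_neg at hlen
    exact hne (eq_of_edges_subset A.pstar_isPath hq hsub
      (by rw [A.pstar_length]; exact hlen))
  push_neg at hA
  have hps : ∀ v ∈ q.support, v ∈ A.pstar.support →
      v = Sum.inl s1 ∨ v = Sum.inl s3 := by
    intro v hv hvp
    by_cases h : v = Sum.inl s1
    exacts [Or.inl h, Or.inr (hA v hv hvp h)]
  set meets1 : Fin (M + 1) → Prop := fun i => ∃ v ∈ q.support,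
    v ∈ (A.P1 i).support ∧ v ≠ Sum.inl s1 ∧ v ≠ Sum.inl s2 with hmeets1
  set meets2 : Fin (M + 1) → Prop := fun j => ∃ v ∈ q.support,
    v ∈ (A.P2 j).support ∧ v ≠ Sum.inl s2 ∧ v ≠ Sum.inl s3 with hmeets2
  have hcor1 : ∀ i, meets1 i → ∀ e ∈ (A.P1 i).edges, e ∈ q.edges := by
    rintro i ⟨v0, h1, h2, h3, h4⟩
    exact corridor (A.P1_isPath i) (iso_P1 A hN i) hq
      (fun _ => Or.inl rfl) (fun h => absurd h (s3_not_mem_P1 A h13 h23 i))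
      h2 h3 h4 h1
  have hcor2 : ∀ j, meets2 j → ∀ e ∈ (A.P2 j).edges, e ∈ q.edges := by
    rintro j ⟨v0, h1, h2, h3, h4⟩
    exact corridor (A.P2_isPath j) (iso_P2 A hN j) hq
      (fun h => absurd h (s1_not_mem_P2 A h12 h13 j)) (fun _ => Or.inr rfl)
      h2 h3 h4 h1
  have hnq : 2 * N ≤ q.length → 2 * N - 1 < q.length := by omega
  rcases Classical.em (∃ i, meets1 i) with hm1 | hm1
  · obtain ⟨i, hi⟩ := hm1
    rcases Classical.em (∃ i', meets1 i' ∧ i' ≠ i) with hm1' | hm1'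
    · obtain ⟨i', hi', hne'⟩ := hm1'
      apply hnq
      have := count_two hq (A.P1 i).edges (A.P1 i').edges
        (A.P1_isPath i).edges_nodup (A.P1_isPath i').edges_nodup
        (fun e he he' => hne' (P1_edges_disj A hN he' he))
        (hcor1 i hi) (hcor1 i' hi')
      rw [Walk.length_edges, Walk.length_edges, A.P1_length, A.P1_length] at this
      omega
    rcases Classical.em (∃ j, meets2 j) with hm2 | hm2
    · obtain ⟨j, hj⟩ := hm2
      apply hnq
      have := count_two hq (A.P1 i).edges (A.P2 j).edges
        (A.P1_isPath i).edges_nodup (A.P2_isPath j).edges_nodup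
        (fun e he he' => P1_P2_edges_disj A he he')
        (hcor1 i hi) (hcor2 j hj)
      rw [Walk.length_edges, Walk.length_edges, A.P1_length, A.P2_length] at this
      omega
    · exfalso
      push_neg at hm1' hm2
      have hs2q : (Sum.inl s2 : V ⊕ W) ∈ q.support := by
        obtain ⟨e, he, hmem⟩ := exists_edge_end (p := A.P1 i) (by
          rw [Walk.not_nil_iff_lt_length, A.P1_length i]; omega)
        exact mem_support_of_edge (hcor1 i hi e he) hmem
      set q2 := q.dropUntil _ hs2q with hq2def
      have hq2path : q2.IsPath := hq.dropUntil hs2q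
      have hq2sub : ∀ z ∈ q2.support, z ∈ q.support :=
        fun z hz => q.support_dropUntil_subset hs2q hz
      have hnotin : ∀ z, z ∈ (q.takeUntil _ hs2q).support →
          z ∈ q2.support.tail → False := by
        have hnd := hq.support_nodup
        rw [← q.take_spec hs2q, Walk.support_append] at hnd
        exact fun z h1 h2 => (List.nodup_append.1 hnd).2.2 z h1 z h2 rfl
      have havoid1i : ∀ v ∈ q2.support, v ∈ (A.P1 i).support →
          v = Sum.inl s1 ∨ v = Sum.inl s2 := by
        by_contra hcon
        push_neg at hcon
        obtain ⟨v, hv, hvs, hv1, hv2⟩ := hcon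
        have hv2' : v ≠ Sum.inl s2 := hv2
        have hsub2 : ∀ e ∈ (A.P1 i).edges, e ∈ q2.edges :=
          corridor (A.P1_isPath i) (iso_P1 A hN i) hq2path
            (fun _ => Or.inr rfl) (fun h => absurd h (s3_not_mem_P1 A h13 h23 i))
            hvs hv1 hv2' hv
        have hs1q2 : (Sum.inl s1 : V ⊕ W) ∈ q2.support := by
          obtain ⟨e, he, hmem⟩ := exists_edge_start (p := A.P1 i) (by
            rw [Walk.not_nil_iff_lt_length, A.P1_length i]; omega)
          exact mem_support_of_edge (hsub2 e he) hmem
        have : (Sum.inl s1 : V ⊕ W) ∈ q2.support.tail := by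
          rw [Walk.support_eq_cons] at hs1q2
          rcases List.mem_cons.1 hs1q2 with h' | h'
          · exact absurd h' (by simp [h12])
          · exact h'
        exact hnotin _ (q.takeUntil _ hs2q).start_mem_support this
      have hreach : (G.deleteEdges E'').Reachable s2 s3 := by
        refine no_corridor_pullback A hN q2 (fun e he => hqD e
          (q.edges_dropUntil_subset hs2q he)) ?_ ?_ ?_
        · intro i' v hv hvs
          by_cases hii : i' = i
          · exact havoid1i v hv (hii ▸ hvs)
          · by_cases h1 : v = Sum.inl s1
            · exact Or.inl h1
            by_cases h2 : v = Sum.inl s2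
            · exact Or.inr h2
            exact absurd (hm1' i' ⟨v, hq2sub v hv, hvs, h1, h2⟩) hii
        · intro j v hv hvs
          by_cases h2 : v = Sum.inl s2
          · exact Or.inl h2
          by_cases h3 : v = Sum.inl s3
          · exact Or.inr h3
          exact absurd (hm2 j) (by
            intro hmj
            exact hmj ⟨v, hq2sub v hv, hvs, h2, h3⟩)
        · exact fun v hv hvp => hps v (hq2sub v hv) hvp
      exact hdis.2.2 hreach
  rcases Classical.em (∃ j, meets2 j) with hm2 | hm2
  · obtain ⟨j, hj⟩ := hm2
    rcases Classical.em (∃ j', meets2 j' ∧ j' ≠ j) with hm2' | hm2'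
    · obtain ⟨j', hj', hne'⟩ := hm2'
      apply hnq
      have := count_two hq (A.P2 j).edges (A.P2 j').edges
        (A.P2_isPath j).edges_nodup (A.P2_isPath j').edges_nodup
        (fun e he he' => hne' (P2_edges_disj A hN he' he))
        (hcor2 j hj) (hcor2 j' hj')
      rw [Walk.length_edges, Walk.length_edges, A.P2_length, A.P2_length] at this
      omega
    · exfalso
      push_neg at hm1 hm2'
      have hs2q : (Sum.inl s2 : V ⊕ W) ∈ q.support := by
        obtain ⟨e, he, hmem⟩ := exists_edge_start (p := A.P2 j) (by
          rw [Walk.not_nil_iff_lt_length, A.P2_length j]; omega)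
        exact mem_support_of_edge (hcor2 j hj e he) hmem
      set q1 := q.takeUntil _ hs2q with hq1def
      have hq1path : q1.IsPath := hq.takeUntil hs2q
      have hq1sub : ∀ z ∈ q1.support, z ∈ q.support :=
        fun z hz => q.support_takeUntil_subset hs2q hz
      have hnotin : ∀ z, z ∈ q1.support →
          z ∈ (q.dropUntil _ hs2q).support.tail → False := by
        have hnd := hq.support_nodup
        rw [← q.take_spec hs2q, Walk.support_append] at hnd
        exact fun z h1 h2 => (List.nodup_append.1 hnd).2.2 z h1 z h2 rfl
      have havoid2j : ∀ v ∈ q1.support, v ∈ (A.P2 j).support →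
          v = Sum.inl s2 ∨ v = Sum.inl s3 := by
        by_contra hcon
        push_neg at hcon
        obtain ⟨v, hv, hvs, hv2, hv3⟩ := hcon
        have hsub2 : ∀ e ∈ (A.P2 j).edges, e ∈ q1.edges :=
          corridor (A.P2_isPath j) (iso_P2 A hN j) hq1path
            (fun h => absurd h (s1_not_mem_P2 A h12 h13 j)) (fun _ => Or.inl rfl)
            hvs hv2 hv3 hv
        have hs3q1 : (Sum.inl s3 : V ⊕ W) ∈ q1.support := by
          obtain ⟨e, he, hmem⟩ := exists_edge_end (p := A.P2 j) (by
            rw [Walk.not_nil_iff_lt_length, A.P2_length j]; omega)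
          exact mem_support_of_edge (hsub2 e he) hmem
        have h3tail : (Sum.inl s3 : V ⊕ W) ∈ (q.dropUntil _ hs2q).support.tail := by
          have h3mem : (Sum.inl s3 : V ⊕ W) ∈ (q.dropUntil _ hs2q).support :=
            Walk.end_mem_support _
          rw [Walk.support_eq_cons] at h3mem
          rcases List.mem_cons.1 h3mem with h' | h'
          · exact absurd h' (by simp [h23.symm])
          · exact h'
        exact hnotin _ hs3q1 h3tail
      have hreach : (G.deleteEdges E'').Reachable s1 s2 := by
        refine no_corridor_pullback A hN q1 (fun e he => hqD e
          (q.edges_takeUntil_subset hs2q he)) ?_ ?_ ?_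
        · intro i v hv hvs
          by_cases h1 : v = Sum.inl s1
          · exact Or.inl h1
          by_cases h2 : v = Sum.inl s2
          · exact Or.inr h2
          exact absurd (hm1 i) (by
            intro hmi
            exact hmi ⟨v, hq1sub v hv, hvs, h1, h2⟩)
        · intro j' v hv hvs
          by_cases hjj : j' = j
          · exact havoid2j v hv (hjj ▸ hvs)
          · by_cases h2 : v = Sum.inl s2
            · exact Or.inl h2
            by_cases h3 : v = Sum.inl s3
            · exact Or.inr h3
            exact absurd (hm2' j' ⟨v, hq1sub v hv, hvs, h2, h3⟩) hjj
        · exact fun v hv hvp => hps v (hq1sub v hv) hvp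
      exact hdis.1 hreach
  · exfalso
    push_neg at hm1 hm2
    have hreach : (G.deleteEdges E'').Reachable s1 s3 := by
      refine no_corridor_pullback A hN q hqD ?_ ?_ hps
      · intro i v hv hvs
        by_cases h1 : v = Sum.inl s1
        · exact Or.inl h1
        by_cases h2 : v = Sum.inl s2
        · exact Or.inr h2
        exact absurd (hm1 i) fun hmi => hmi ⟨v, hv, hvs, h1, h2⟩
      · intro j v hv hvs
        by_cases h2 : v = Sum.inl s2
        · exact Or.inl h2
        by_cases h3 : v = Sum.inl s3
        · exact Or.inr h3
        exact absurd (hm2 j) fun hmj => hmj ⟨v, hv, hvs, h2, h3⟩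
    exact hdis.2.1 hreach


include A in
lemma inl_edge_not_pstar (hN : 2 ≤ N) (e₀ : Sym2 V) :
    Sym2.map Sum.inl e₀ ∉ A.pstar.edges := by
  induction e₀ using Sym2.ind with
  | _ u v =>
    intro hmem
    obtain ⟨w, hw⟩ := pstar_edge_inr A hN hmem
    rw [Sym2.map_pair_eq, Sym2.mem_iff] at hw
    rcases hw with h | h <;> simp at h

include A in
/-- The forward direction: the copy of a disconnecting set is a Force Path Cut
solution in the augmented graph. -/
lemma forward (hN : 2 ≤ N) (h12 : s1 ≠ s2) (h13 : s1 ≠ s3) (h23 : s2 ≠ s3)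
    {E'' : Set (Sym2 V)} (hE : E'' ⊆ G.edgeSet)
    (hdis : Disconnects G E'' s1 s2 s3) :
    FPCSol Ghat A.pstar (Sym2.map Sum.inl '' E'') := by
  refine ⟨?_, ?_, ?_⟩
  · rintro e ⟨e₀, he₀, rfl⟩
    revert he₀
    induction e₀ using Sym2.ind with
    | _ u v =>
      intro he₀
      rw [Sym2.map_pair_eq, SimpleGraph.mem_edgeSet]
      exact (inl_inl_adj A hN).2 ((SimpleGraph.mem_edgeSet G).1 (hE he₀))
  · rintro e he ⟨e₀, he₀, rfl⟩
    exact inl_edge_not_pstar A hN e₀ he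
  · intro q hqpath hqne
    have hq'path : (q.mapLe (SimpleGraph.deleteEdges_le _)).IsPath := hqpath.mapLe _
    have hq'D : ∀ e ∈ (q.mapLe (SimpleGraph.deleteEdges_le
        (Sym2.map Sum.inl '' E''))).edges, e ∉ Sym2.map Sum.inl '' E'' := by
      rw [edges_mapLe]
      intro e he hmem
      have h' := q.edges_subset_edgeSet he
      rw [SimpleGraph.edgeSet_deleteEdges] at h'
      exact h'.2 hmem
    have hst := struct A hN h12 h13 h23 hdis _ hq'path hq'D hqne
    have hlen : (q.mapLe (SimpleGraph.deleteEdges_le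
        (Sym2.map Sum.inl '' E''))).length = q.length := by
      simp [Walk.mapLe, Walk.length_map]
    rw [A.pstar_length]
    omega

include A in
/-- The backward direction: restricting a small Force Path Cut solution to the
copied edges yields a disconnecting set. -/
lemma backward [Fintype V] (hN : 2 ≤ N) (h12 : s1 ≠ s2) (h13 : s1 ≠ s3)
    (h23 : s2 ≠ s3) (hNcard : Fintype.card V ≤ N)
    {S : Set (Sym2 (V ⊕ W))} (hsol : FPCSol Ghat A.pstar S) (hfin : S.Finite)
    (hcard : S.ncard ≤ M) :
    Disconnects G {e | e ∈ G.edgeSet ∧ Sym2.map Sum.inl e ∈ S} s1 s2 s3 := by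
  classical
  set x : Set (Sym2 V) := {e | e ∈ G.edgeSet ∧ Sym2.map Sum.inl e ∈ S} with hxdef
  have hpush : ∀ {u v : V} (γ : (G.deleteEdges x).Walk u v), γ.IsPath →
      ∃ δ : (Ghat.deleteEdges S).Walk (Sum.inl u) (Sum.inl v),
        δ.length < N ∧ ∀ e ∈ δ.edges, ∃ e₀ : Sym2 V, e = Sym2.map Sum.inl e₀ := by
    intro u v γ hγ
    have hlenγ : γ.length < Fintype.card V := hγ.length_lt
    have hedges : ∀ e ∈ (γ.mapLe (SimpleGraph.deleteEdges_le x)).edges,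
        Sym2.map Sum.inl e ∉ S := by
      rw [edges_mapLe]
      intro e he
      have hx := γ.edges_subset_edgeSet he
      rw [SimpleGraph.edgeSet_deleteEdges] at hx
      intro hmem
      exact hx.2 ⟨hx.1, hmem⟩
    obtain ⟨δ, hδlen, hδ⟩ := pushforward A hN S (γ.mapLe (SimpleGraph.deleteEdges_le x))
      hedges
    have : (γ.mapLe (SimpleGraph.deleteEdges_le x)).length = γ.length := by
      simp [Walk.mapLe, Walk.length_map]
    refine ⟨δ, by omega, fun e he => ?_⟩
    obtain ⟨e₀, -, h2⟩ := hδ e he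
    exact ⟨e₀, h2⟩
  obtain ⟨i0, hi0⟩ := pigeon (fun i => (A.P1 i).edges)
    (fun i j e hei hej => P1_edges_disj A hN hei hej) S hfin hcard
  obtain ⟨j0, hj0⟩ := pigeon (fun i => (A.P2 i).edges)
    (fun i j e hei hej => P2_edges_disj A hN hei hej) S hfin hcard
  have hmain : ∀ (q0 : (Ghat.deleteEdges S).Walk (Sum.inl s1) (Sum.inl s3)),
      q0.length ≤ 2 * N - 1 →
      (∀ e ∈ q0.edges, e ∉ A.pstar.edges) → False := by
    intro q0 hlen hdisj
    have hb := q0.bypass_isPath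
    have hble := q0.length_bypass_le
    have hne : q0.bypass.mapLe (SimpleGraph.deleteEdges_le S) ≠ A.pstar := by
      intro heq
      have hpos : 0 < A.pstar.edges.length := by
        rw [Walk.length_edges, A.pstar_length]; omega
      obtain ⟨e, he⟩ := List.exists_mem_of_ne_nil _ (List.ne_nil_of_length_pos hpos)
      have hmem : e ∈ (q0.bypass.mapLe (SimpleGraph.deleteEdges_le S)).edges := by
        rw [heq]; exact he
      rw [edges_mapLe] at hmem
      exact hdisj e (q0.edges_bypass_subset hmem) he
    have hnp := hsol.2.2 q0.bypass hb hne
    rw [A.pstar_length] at hnp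
    omega
  refine ⟨?_, ?_, ?_⟩
  · rintro ⟨w0⟩
    obtain ⟨δ1, h1len, h1edges⟩ := hpush w0.bypass w0.bypass_isPath
    have hδP2 : ∀ e ∈ (A.P2 j0).edges, e ∉ S := hj0
    refine hmain (δ1.append (Walk.toDeleteEdges S (A.P2 j0) hδP2)) ?_ ?_
    · rw [Walk.length_append, Walk.length_transfer, A.P2_length]
      omega
    · intro e he
      rw [Walk.edges_append, List.mem_append] at he
      rcases he with he | he
      · obtain ⟨e₀, rfl⟩ := h1edges e he
        exact inl_edge_not_pstar A hN e₀
      · rw [Walk.edges_transfer] at he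
        exact fun hp => P2_pstar_edges_disj A he hp
  · rintro ⟨w0⟩
    obtain ⟨δ1, h1len, h1edges⟩ := hpush w0.bypass w0.bypass_isPath
    refine hmain δ1 (by omega) ?_
    intro e he
    obtain ⟨e₀, rfl⟩ := h1edges e he
    exact inl_edge_not_pstar A hN e₀
  · rintro ⟨w0⟩
    obtain ⟨δ1, h1len, h1edges⟩ := hpush w0.bypass w0.bypass_isPath
    have hδP1 : ∀ e ∈ (A.P1 i0).edges, e ∉ S := hi0
    refine hmain ((Walk.toDeleteEdges S (A.P1 i0) hδP1).append δ1) ?_ ?_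
    · rw [Walk.length_append, Walk.length_transfer, A.P1_length]
      omega
    · intro e he
      rw [Walk.edges_append, List.mem_append] at he
      rcases he with he | he
      · rw [Walk.edges_transfer] at he
        exact fun hp => P1_pstar_edges_disj A he hp
      · obtain ⟨e₀, rfl⟩ := h1edges e he
        exact inl_edge_not_pstar A hN e₀

lemma disconnects_all {V' : Type*} (G' : SimpleGraph V') {t1 t2 t3 : V'}
    (h12 : t1 ≠ t2) (h13 : t1 ≠ t3) (h23 : t2 ≠ t3) :
    Disconnects G' G'.edgeSet t1 t2 t3 := by
  have key : ∀ u v : V', u ≠ v → ¬ (G'.deleteEdges G'.edgeSet).Reachable u v := by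
    rintro u v huv ⟨w0⟩
    cases w0 with
    | nil => exact huv rfl
    | cons h w' =>
      rw [SimpleGraph.deleteEdges_adj] at h
      exact h.2 ((SimpleGraph.mem_edgeSet G').2 h.1)
  exact ⟨key _ _ h12, key _ _ h13, key _ _ h23⟩

end Aug

end Stmt6Aux

/-- Let `optA` be the minimum size of an edge set disconnecting the
terminals pairwise in `G` and `optB` the minimum size of a Force Path Cut solution for
`(Ĝ, p*)`.  For a Force Path Cut solution `Ê'` for `(Ĝ, p*)`, put `x = Ê' ∩ E` if
`|Ê'| < M` and `x = E` otherwise.  Then `x` disconnects the terminals pairwise in `G`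
and `| |x| − optA | ≤ | |Ê'| − optB |`. -/
theorem stmt6 {V W : Type*} [Fintype V] [DecidableEq V]
    (G : SimpleGraph V) [DecidableRel G.Adj] (s1 s2 s3 : V)
    (h12 : s1 ≠ s2) (h13 : s1 ≠ s3) (h23 : s2 ≠ s3)
    (Ghat : SimpleGraph (V ⊕ W))
    (A : AugSpec G s1 s2 s3 (Fintype.card V) G.edgeFinset.card Ghat)
    (hex : ∃ E' : Set (Sym2 V), E' ⊆ G.edgeSet ∧ Disconnects G E' s1 s2 s3)
    (optA optB : ℕ)
    (hoptA : optA = sInf {n : ℕ | ∃ E' : Set (Sym2 V),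
        E' ⊆ G.edgeSet ∧ Disconnects G E' s1 s2 s3 ∧ E'.ncard = n})
    (hoptB : optB = sInf {n : ℕ | ∃ Ehat' : Set (Sym2 (V ⊕ W)),
        FPCSol Ghat A.pstar Ehat' ∧ Ehat'.ncard = n})
    (Ehat : Set (Sym2 (V ⊕ W))) (hsol : FPCSol Ghat A.pstar Ehat)
    (x : Set (Sym2 V))
    (hx : x = if Ehat.ncard < G.edgeFinset.card
        then {e | e ∈ G.edgeSet ∧ Sym2.map Sum.inl e ∈ Ehat} else G.edgeSet) :
    Disconnects G x s1 s2 s3 ∧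
      |(x.ncard : ℤ) - (optA : ℤ)| ≤ |(Ehat.ncard : ℤ) - (optB : ℤ)| := by
  classical
  open Stmt6Aux in
  have hN2 : 2 ≤ Fintype.card V :=
    Fintype.one_lt_card_iff_nontrivial.2 ⟨⟨s1, s2, h12⟩⟩
  have hMeq : G.edgeSet.ncard = G.edgeFinset.card := by
    rw [← SimpleGraph.coe_edgeFinset, Set.ncard_coe_finset]
  have hEfin := Stmt6Aux.ghat_edgeSet_finite A
  have hSfin : ∀ {S : Set (Sym2 (V ⊕ W))}, FPCSol Ghat A.pstar S → S.Finite :=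
    fun hs => hEfin.subset hs.1
  have hxle : ∀ (S : Set (Sym2 (V ⊕ W))), S.Finite →
      ({e | e ∈ G.edgeSet ∧ Sym2.map Sum.inl e ∈ S} : Set (Sym2 V)).ncard ≤
        S.ncard := by
    intro S hf
    exact Set.ncard_le_ncard_of_injOn (Sym2.map Sum.inl) (fun a ha => ha.2)
      ((Sym2.map.injective Sum.inl_injective).injOn) hf
  have hAle : ∀ {S : Set (Sym2 (V ⊕ W))}, FPCSol Ghat A.pstar S →
      optA ≤ S.ncard := by
    intro S hs
    rcases lt_or_ge S.ncard G.edgeFinset.card with hlt | hge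
    · have hdis := Stmt6Aux.backward A hN2 h12 h13 h23 le_rfl hs (hSfin hs)
        (by omega)
      have hmem : ({e | e ∈ G.edgeSet ∧ Sym2.map Sum.inl e ∈ S} :
          Set (Sym2 V)).ncard ∈ {n : ℕ | ∃ E' : Set (Sym2 V),
          E' ⊆ G.edgeSet ∧ Disconnects G E' s1 s2 s3 ∧ E'.ncard = n} :=
        ⟨_, fun e he => he.1, hdis, rfl⟩
      have h1 : optA ≤ ({e | e ∈ G.edgeSet ∧ Sym2.map Sum.inl e ∈ S} :
          Set (Sym2 V)).ncard := by rw [hoptA]; exact Nat.sInf_le hmem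
      exact le_trans h1 (hxle S (hSfin hs))
    · have hmem : G.edgeSet.ncard ∈ {n : ℕ | ∃ E' : Set (Sym2 V),
          E' ⊆ G.edgeSet ∧ Disconnects G E' s1 s2 s3 ∧ E'.ncard = n} :=
        ⟨G.edgeSet, Set.Subset.rfl, Stmt6Aux.disconnects_all G h12 h13 h23, rfl⟩
      have h1 : optA ≤ G.edgeSet.ncard := by rw [hoptA]; exact Nat.sInf_le hmem
      omega
  have hBle : optB ≤ Ehat.ncard := by
    rw [hoptB]; exact Nat.sInf_le ⟨Ehat, hsol, rfl⟩
  have hBmem : ∃ S, FPCSol Ghat A.pstar S ∧ S.ncard = optB := by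
    have hne : {n : ℕ | ∃ Ehat' : Set (Sym2 (V ⊕ W)),
        FPCSol Ghat A.pstar Ehat' ∧ Ehat'.ncard = n}.Nonempty :=
      ⟨Ehat.ncard, Ehat, hsol, rfl⟩
    have h := Nat.sInf_mem hne
    rw [← hoptB] at h
    exact h
  have hAmem : ∃ E₀ : Set (Sym2 V), E₀ ⊆ G.edgeSet ∧
      Disconnects G E₀ s1 s2 s3 ∧ E₀.ncard = optA := by
    obtain ⟨E', h1, h2⟩ := hex
    have hne : {n : ℕ | ∃ E' : Set (Sym2 V),
        E' ⊆ G.edgeSet ∧ Disconnects G E' s1 s2 s3 ∧ E'.ncard = n}.Nonempty :=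
      ⟨E'.ncard, E', h1, h2, rfl⟩
    have h := Nat.sInf_mem hne
    rw [← hoptA] at h
    exact h
  obtain ⟨S₀, hS₀, hS₀card⟩ := hBmem
  have hab : optA ≤ optB := hS₀card ▸ hAle hS₀
  obtain ⟨E₀, hE₀sub, hE₀dis, hE₀card⟩ := hAmem
  have hba : optB ≤ optA := by
    have himg : (Sym2.map (Sum.inl : V → V ⊕ W) '' E₀).ncard = optA := by
      rw [Set.ncard_image_of_injective _ (Sym2.map.injective Sum.inl_injective),
        hE₀card]
    rw [hoptB]
    exact Nat.sInf_le ⟨_, Stmt6Aux.forward A hN2 h12 h13 h23 hE₀sub hE₀dis, himg⟩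
  have heq : optA = optB := le_antisymm hab hba
  have habs : ∀ (m n : ℕ), n ≤ m → |(m : ℤ) - (n : ℤ)| = (m : ℤ) - (n : ℤ) := by
    intro m n h
    exact abs_of_nonneg (sub_nonneg.2 (Nat.cast_le.2 h))
  by_cases hcase : Ehat.ncard < G.edgeFinset.card
  · rw [hx, if_pos hcase]
    have hdis := Stmt6Aux.backward A hN2 h12 h13 h23 le_rfl hsol (hSfin hsol)
      (by omega)
    refine ⟨hdis, ?_⟩
    have h1 : optA ≤ ({e | e ∈ G.edgeSet ∧ Sym2.map Sum.inl e ∈ Ehat} :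
        Set (Sym2 V)).ncard := by
      rw [hoptA]
      exact Nat.sInf_le ⟨_, fun e he => he.1, hdis, rfl⟩
    have h2 := hxle Ehat (hSfin hsol)
    rw [habs _ _ h1, habs _ _ (heq ▸ le_trans h1 h2 : optB ≤ Ehat.ncard)]
    push_cast
    omega
  · rw [hx, if_neg hcase]
    refine ⟨Stmt6Aux.disconnects_all G h12 h13 h23, ?_⟩
    push_neg at hcase
    have h1 : optA ≤ G.edgeSet.ncard := by
      rw [hoptA]
      exact Nat.sInf_le ⟨G.edgeSet, Set.Subset.rfl,
        Stmt6Aux.disconnects_all G h12 h13 h23, rfl⟩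
    have h2 : optB ≤ Ehat.ncard := hBle
    rw [habs _ _ h1, habs _ _ h2]
    push_cast
    omega
end

section
/- Let G=(V,E) be an undirected unweighted graph with an s–t path p*, and let Ĝ=(V,Â) be its bidirected version with arc set Â = {(u,v),(v,u) : {u,v}∈E} and unit weights, where p* is regarded as a directed path using forward arcs. If Ê'⊆Â is a directed Force Path Cut solution for (Ĝ,p*) containing no arc (u,v) or (v,u) with {u,v}∈E_{p*}, then the undirected edge set E' = {{u,v} : (u,v)∈Ê'} is an undirected Force Path Cut solution for (G,p*). -/
/-- `p` (a list of vertices) is a directed path from `s` to `t` in the directed graph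
with arc set `A`: it starts at `s`, ends at `t`, consecutive vertices are joined by
arcs of `A`, and no vertex repeats.  Its length (number of arcs) is `p.length - 1`. -/
def IsDiPath {V : Type*} (A : Set (V × V)) (s t : V) (p : List V) : Prop :=
  p.head? = some s ∧ p.getLast? = some t ∧
    p.Chain' (fun u v => (u, v) ∈ A) ∧ p.Nodup

/-- `E'` is a directed Force Path Cut solution for the directed graph with arc set `A`
(unit arc weights), terminals `s, t` and target directed path `p` (given by its vertex
list): `E'` consists of arcs of `A`, avoids the arcs of `p`, and after removing `E'`
the path `p` is strictly shorter than every other directed `s`–`t` path. -/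
def DiFPCSol {V : Type*} (A : Set (V × V)) (s t : V) (p : List V)
    (E' : Set (V × V)) : Prop :=
  E' ⊆ A ∧ (∀ a ∈ p.zip p.tail, a ∉ E') ∧
    ∀ q : List V, IsDiPath (A \ E') s t q → q ≠ p → p.length < q.length

/-- The arc set of the bidirected version of the undirected graph `G`. -/
def biArcs {V : Type*} (G : SimpleGraph V) : Set (V × V) :=
  {a : V × V | G.Adj a.1 a.2}

/-!
An `s`–`t` path `q` of `G` avoiding `E'` uses, in its direction of travel, only arcs outside
`Ê'`, because every arc of `Ê'` lies over an edge of `E'`. So the vertex list of `q` is a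
directed `s`–`t` path after removing `Ê'`, with as many arcs as `q` has edges, and it differs
from `p*` exactly when `q` does; the directed solution then makes `p*` strictly shorter.
-/

open SimpleGraph

theorem SimpleGraph.Walk.IsPath.isDiPath_support {V : Type*} {H : SimpleGraph V}
    {A : Set (V × V)} (hA : ∀ u v, H.Adj u v → (u, v) ∈ A) {s t : V} {q : H.Walk s t}
    (hq : q.IsPath) : IsDiPath A s t q.support :=
  ⟨by rw [← q.cons_tail_support]; rfl,
    by rw [List.getLast?_eq_some_getLast q.support_ne_nil, q.getLast_support],
    q.isChain_adj_support.imp fun u v => hA u v, hq.support_nodup⟩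

theorem mem_biArcs_diff_of_adj_deleteEdges {V : Type*} {G : SimpleGraph V}
    {Ehat : Set (V × V)} {u v : V}
    (h : (G.deleteEdges ((fun a : V × V => s(a.1, a.2)) '' Ehat)).Adj u v) :
    (u, v) ∈ biArcs G \ Ehat := by
  rw [deleteEdges_adj] at h
  exact ⟨h.1, fun huv => h.2 ⟨(u, v), huv, rfl⟩⟩

theorem stmt7_general {V : Type*} (G : SimpleGraph V) (s t : V)
    (pstar : G.Walk s t)
    (Ehat : Set (V × V))
    (havoid : ∀ u v : V, s(u, v) ∈ pstar.edges → (u, v) ∉ Ehat ∧ (v, u) ∉ Ehat)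
    (hsol : DiFPCSol (biArcs G) s t pstar.support Ehat) :
    FPCSol G pstar ((fun a : V × V => s(a.1, a.2)) '' Ehat) := by
  obtain ⟨hsub, -, hmin⟩ := hsol
  refine ⟨?_, ?_, ?_⟩
  · rintro e ⟨⟨u, v⟩, huv, rfl⟩
    exact hsub huv
  · rintro e he ⟨⟨u, v⟩, huv, rfl⟩
    exact (havoid u v he).1 huv
  · intro q hq hne
    have hdi := hq.isDiPath_support fun _ _ => mem_biArcs_diff_of_adj_deleteEdges
    have hsupp : q.support ≠ pstar.support := fun h =>
      hne (Walk.ext_support (by rwa [Walk.support_mapLe_eq_support]))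
    simpa [Walk.length_support] using hmin q.support hdi hsupp

/-- If `Ê'` is a directed Force Path Cut solution for the bidirected
version of `G` with target directed path `p*` (the support list of the undirected
target path), containing no arc `(u,v)` or `(v,u)` with `{u,v}` an edge of `p*`, then
`E' = {{u,v} : (u,v) ∈ Ê'}` is an undirected Force Path Cut solution for `(G, p*)`. -/
theorem stmt7 {V : Type*} (G : SimpleGraph V) (s t : V) (hst : s ≠ t)
    (pstar : G.Walk s t) (hpstar : pstar.IsPath)
    (Ehat : Set (V × V))
    (havoid : ∀ u v : V, s(u, v) ∈ pstar.edges → (u, v) ∉ Ehat ∧ (v, u) ∉ Ehat)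
    (hsol : DiFPCSol (biArcs G) s t pstar.support Ehat) :
    FPCSol G pstar ((fun a : V × V => s(a.1, a.2)) '' Ehat) :=
  stmt7_general G s t pstar Ehat havoid hsol
end

section
/- Let H be a directed graph with unit arc weights, p* a directed s–t path, and E' a directed Force Path Cut solution for (H,p*). If E' contains both arcs (u,v) and (v,u) for some pair of vertices u,v, then at least one of E'∖{(u,v)} and E'∖{(v,u)} is also a directed Force Path Cut solution for (H,p*). -/
lemma chain'_iff_pairs {V : Type*} {R : V → V → Prop} :
    ∀ l : List V, List.Chain' R l ↔ ∀ p ∈ l.zip l.tail, R p.1 p.2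
  | [] => by simp [List.Chain']
  | [x] => by simp [List.Chain']
  | x :: y :: l => by
      rw [List.Chain', List.isChain_cons_cons]
      simp only [List.tail_cons, List.zip_cons_cons, List.mem_cons]
      constructor
      · rintro ⟨h1, h2⟩ p (rfl | hp)
        · exact h1
        · exact (chain'_iff_pairs (y :: l)).1 h2 p hp
      · intro h
        exact ⟨h _ (Or.inl rfl), (chain'_iff_pairs (y :: l)).2 fun p hp => h p (Or.inr hp)⟩

lemma mem_zip_tail {V : Type*} {a b : V} :
    ∀ {l : List V}, (a, b) ∈ l.zip l.tail → ∃ l1 l2, l = l1 ++ a :: b :: l2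
  | [], h => by simp at h
  | [x], h => by simp at h
  | x :: y :: l, h => by
      simp only [List.tail_cons, List.zip_cons_cons, List.mem_cons, Prod.mk.injEq] at h
      rcases h with ⟨rfl, rfl⟩ | h
      · exact ⟨[], l, rfl⟩
      · obtain ⟨l1, l2, hl⟩ := mem_zip_tail h
        exact ⟨x :: l1, l2, by rw [hl]; rfl⟩

lemma walk_to_path {V : Type*} {R : V → V → Prop} :
    ∀ (n : ℕ) (W : List V), W.length ≤ n → ∀ x t : V, List.Chain' R (x :: W) →
      (x :: W).getLast? = some t →
      ∃ q : List V, q.head? = some x ∧ q.getLast? = some t ∧ List.Chain' R q ∧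
        q.Nodup ∧ q.length ≤ (x :: W).length ∧ ∀ z ∈ q, z ∈ x :: W := by
  intro n
  induction n with
  | zero =>
    intro W hW x t hc hl
    have hWnil : W = [] := List.length_eq_zero_iff.mp (Nat.le_zero.mp hW)
    subst hWnil
    have : x = t := by simpa using hl
    subst this
    exact ⟨[x], rfl, rfl, by simp [List.Chain'], by simp, le_rfl, by simp⟩
  | succ n ih =>
    intro W hW x t hc hl
    by_cases hx : x ∈ W
    · obtain ⟨w1, w2, rfl⟩ := List.append_of_mem hx
      have hsuf : (x :: w2) <:+ (x :: (w1 ++ x :: w2)) := ⟨x :: w1, by simp⟩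
      have hc2 := hc.suffix hsuf
      have hl2 : (x :: w2).getLast? = some t := by
        rw [show x :: (w1 ++ x :: w2) = (x :: w1) ++ (x :: w2) by simp,
          List.getLast?_append_of_ne_nil _ (by simp)] at hl
        exact hl
      have hw2 : w2.length ≤ n := by
        simp only [List.length_append, List.length_cons] at hW; omega
      obtain ⟨q, h1, h2, h3, h4, h5, h6⟩ := ih w2 hw2 x t hc2 hl2
      refine ⟨q, h1, h2, h3, h4, ?_, ?_⟩
      · simp only [List.length_cons, List.length_append] at h5 ⊢; omega
      · intro z hz
        have := h6 z hz
        simp only [List.mem_cons, List.mem_append] at this ⊢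
        tauto
    · cases W with
      | nil =>
        have : x = t := by simpa using hl
        subst this
        exact ⟨[x], rfl, rfl, by simp [List.Chain'], by simp, le_rfl, by simp⟩
      | cons y W' =>
        have hc' : List.Chain' R (y :: W') := hc.tail
        have hl' : (y :: W').getLast? = some t := by
          rwa [List.getLast?_cons_cons] at hl
        have hW' : W'.length ≤ n := by simp at hW; omega
        obtain ⟨q, h1, h2, h3, h4, h5, h6⟩ := ih W' hW' y t hc' hl'
        have hxq : x ∉ q := fun hq => hx (h6 x hq)
        refine ⟨x :: q, rfl, ?_, ?_, ?_, ?_, ?_⟩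
        · cases q with
          | nil => simp at h1
          | cons a q' => rwa [List.getLast?_cons_cons]
        · refine List.isChain_cons.2 ⟨fun y' hy' => ?_, h3⟩
          rw [h1] at hy'
          obtain rfl : y = y' := by simpa using hy'
          exact (List.isChain_cons_cons.1 hc).1
        · exact List.nodup_cons.2 ⟨hxq, h4⟩
        · simp only [List.length_cons] at h5 ⊢; omega
        · intro z hz
          rcases List.mem_cons.1 hz with rfl | hz
          · exact List.mem_cons_self
          · exact List.mem_cons_of_mem _ (h6 z hz)

/-- If a directed Force Path Cut solution `E'` for `(H, p*)` contains
both arcs `(u,v)` and `(v,u)`, then removing one of the two from `E'` still yields a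
directed Force Path Cut solution. -/
theorem stmt8 {V : Type*} (A : Set (V × V)) (s t : V) (hst : s ≠ t)
    (pstar : List V) (hpstar : IsDiPath A s t pstar)
    (E' : Set (V × V)) (hsol : DiFPCSol A s t pstar E')
    (u v : V) (huv : (u, v) ∈ E') (hvu : (v, u) ∈ E') :
    DiFPCSol A s t pstar (E' \ {(u, v)}) ∨ DiFPCSol A s t pstar (E' \ {(v, u)}) := by
  obtain ⟨hEA, hEp, hmin⟩ := hsol
  by_contra hcon
  push_neg at hcon
  obtain ⟨hnd1, hnd2⟩ := hcon
  have get_wit : ∀ w w' : V, ¬ DiFPCSol A s t pstar (E' \ {(w, w')}) →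
      ∃ q : List V, IsDiPath (A \ (E' \ {(w, w')})) s t q ∧ q ≠ pstar ∧
        q.length ≤ pstar.length ∧ (w, w') ∈ q.zip q.tail := by
    intro w w' hnd
    simp only [DiFPCSol] at hnd
    push_neg at hnd
    obtain ⟨q, hq, hne, hlen⟩ := hnd (fun a ha => hEA ha.1)
      (fun a ha hm => hEp a ha hm.1)
    refine ⟨q, hq, hne, hlen, ?_⟩
    by_contra hmem
    have hq' : IsDiPath (A \ E') s t q := by
      obtain ⟨hh, hl, hc, hn⟩ := hq
      refine ⟨hh, hl, ?_, hn⟩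
      rw [chain'_iff_pairs] at hc ⊢
      intro p hp
      have h := hc p hp
      exact ⟨h.1, fun hE => h.2 ⟨hE, fun hs => hmem (by
        rw [Set.mem_singleton_iff] at hs
        exact hs ▸ hp)⟩⟩
    exact absurd (hmin q hq' hne) (not_lt.2 hlen)
  obtain ⟨q1, hq1, hne1, hlen1, hmem1⟩ := get_wit u v hnd1
  obtain ⟨q2, hq2, hne2, hlen2, hmem2⟩ := get_wit v u hnd2
  obtain ⟨a, b, rfl⟩ := mem_zip_tail hmem1
  obtain ⟨c, d, rfl⟩ := mem_zip_tail hmem2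
  obtain ⟨hh1, hl1, hc1, hn1⟩ := hq1
  obtain ⟨hh2, hl2, hc2, hn2⟩ := hq2
  have hd1 := List.nodup_append.1 hn1
  have hva : v ∉ a := fun h => hd1.2.2 v h v (by simp) rfl
  have huvb : u ∉ v :: b := (List.nodup_cons.1 hd1.2.1).1
  have hne_uv : u ≠ v := fun h => huvb (h ▸ List.mem_cons_self)
  have hd2 := List.nodup_append.1 hn2
  have huc : u ∉ c := fun h => hd2.2.2 u h u (by simp) rfl
  have hvud : v ∉ u :: d := (List.nodup_cons.1 hd2.2.1).1
  have conv : ∀ (w w' : V) (l : List V),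
      List.Chain' (fun x y => (x, y) ∈ A \ (E' \ {(w, w')})) l →
      ((w, w') ∉ l.zip l.tail) →
      List.Chain' (fun x y => (x, y) ∈ A \ E') l := by
    intro w w' l hc hno
    rw [chain'_iff_pairs] at hc ⊢
    intro p hp
    have h := hc p hp
    exact ⟨h.1, fun hE => h.2 ⟨hE, fun hs => hno (by
      rw [Set.mem_singleton_iff] at hs
      exact hs ▸ hp)⟩⟩
  have hcp1 : List.Chain' (fun x y => (x, y) ∈ A \ E') (a ++ [u]) := by
    refine conv u v _ (hc1.prefix ⟨v :: b, by simp⟩) ?_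
    intro h
    obtain ⟨l1, l2, heq⟩ := mem_zip_tail h
    have hvm : v ∈ a ++ [u] := by rw [heq]; simp
    rcases List.mem_append.1 hvm with h' | h'
    · exact hva h'
    · have hvu' : v = u := by simpa using h'
      exact hne_uv hvu'.symm
  have hcs1 : List.Chain' (fun x y => (x, y) ∈ A \ E') (v :: b) := by
    refine conv u v _ (hc1.suffix ⟨a ++ [u], by simp⟩) ?_
    intro h
    obtain ⟨l1, l2, heq⟩ := mem_zip_tail h
    have : u ∈ v :: b := by rw [heq]; simp
    exact huvb this
  have hcp2 : List.Chain' (fun x y => (x, y) ∈ A \ E') (c ++ [v]) := by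
    refine conv v u _ (hc2.prefix ⟨u :: d, by simp⟩) ?_
    intro h
    obtain ⟨l1, l2, heq⟩ := mem_zip_tail h
    have hum : u ∈ c ++ [v] := by rw [heq]; simp
    rcases List.mem_append.1 hum with h' | h'
    · exact huc h'
    · exact hne_uv (by simpa using h')
  have hcs2 : List.Chain' (fun x y => (x, y) ∈ A \ E') (u :: d) := by
    refine conv v u _ (hc2.suffix ⟨c ++ [v], by simp⟩) ?_
    intro h
    obtain ⟨l1, l2, heq⟩ := mem_zip_tail h
    have : v ∈ u :: d := by rw [heq]; simp
    exact hvud this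
  have key : ∀ Wl : List V, Wl.head? = some s → Wl.getLast? = some t →
      List.Chain' (fun x y => (x, y) ∈ A \ E') Wl → Wl.length < pstar.length → False := by
    intro Wl hh hl hc hlen
    cases Wl with
    | nil => simp at hh
    | cons x W' =>
      obtain rfl : x = s := by simpa using hh
      obtain ⟨q, qh, ql, qc, qn, qlen, -⟩ := walk_to_path W'.length W' le_rfl x t hc hl
      have hqlen : q.length < pstar.length := lt_of_le_of_lt qlen hlen
      have hne : q ≠ pstar := fun h => by rw [h] at hqlen; exact lt_irrefl _ hqlen
      exact absurd (hmin q ⟨qh, ql, qc, qn⟩ hne) (not_lt.2 hqlen.le)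
  have hW1chain : List.Chain' (fun x y => (x, y) ∈ A \ E') (a ++ u :: d) := by
    have heq : a ++ u :: d = (a ++ [u]) ++ d := by simp
    rw [heq, List.Chain', List.isChain_append]
    refine ⟨hcp1, (List.isChain_cons.1 hcs2).2, ?_⟩
    intro x hx y hy
    have hx' : u = x := by
      rw [List.getLast?_append_of_ne_nil _ (by simp : ([u] : List V) ≠ [])] at hx
      simpa using hx
    exact hx' ▸ (List.isChain_cons.1 hcs2).1 y hy
  have hW1h : (a ++ u :: d).head? = some s := by
    have heq : (a ++ u :: d).head? = (a ++ u :: v :: b).head? := by cases a <;> simp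
    rw [heq]; exact hh1
  have hW1l : (a ++ u :: d).getLast? = some t := by
    rw [List.getLast?_append_of_ne_nil _ (List.cons_ne_nil _ _)]
    rw [List.getLast?_append_of_ne_nil _ (List.cons_ne_nil _ _),
      List.getLast?_cons_cons] at hl2
    exact hl2
  have hW2chain : List.Chain' (fun x y => (x, y) ∈ A \ E') (c ++ v :: b) := by
    have heq : c ++ v :: b = (c ++ [v]) ++ b := by simp
    rw [heq, List.Chain', List.isChain_append]
    refine ⟨hcp2, (List.isChain_cons.1 hcs1).2, ?_⟩
    intro x hx y hy
    have hx' : v = x := by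
      rw [List.getLast?_append_of_ne_nil _ (by simp : ([v] : List V) ≠ [])] at hx
      simpa using hx
    exact hx' ▸ (List.isChain_cons.1 hcs1).1 y hy
  have hW2h : (c ++ v :: b).head? = some s := by
    have heq : (c ++ v :: b).head? = (c ++ v :: u :: d).head? := by cases c <;> simp
    rw [heq]; exact hh2
  have hW2l : (c ++ v :: b).getLast? = some t := by
    rw [List.getLast?_append_of_ne_nil _ (List.cons_ne_nil _ _)]
    rw [List.getLast?_append_of_ne_nil _ (List.cons_ne_nil _ _),
      List.getLast?_cons_cons] at hl1
    exact hl1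
  have hlensum : (a ++ u :: d).length < pstar.length ∨
      (c ++ v :: b).length < pstar.length := by
    simp only [List.length_append, List.length_cons] at hlen1 hlen2 ⊢
    omega
  rcases hlensum with h | h
  · exact key _ hW1h hW1l hW1chain h
  · exact key _ hW2h hW2l hW2chain h
end

section
/- Let G=(V,E) be an undirected unweighted graph with an s–t path p* and let Ĝ be its bidirected version with p* regarded as a directed path using forward arcs. If E' is an undirected Force Path Cut solution for (G,p*), then the arc set {(u,v),(v,u) : {u,v}∈E'} is a directed Force Path Cut solution for (Ĝ,p*). -/
/-! Removing both orientations of every cut edge from the bidirected graph gives the bidirected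
version of `G \ E'`, and a directed path there is precisely the vertex list of an undirected path
of `G \ E'` of the same length; so the optimality of `p*` transfers from the undirected graph. -/

namespace SimpleGraph

variable {V : Type*}

lemma Walk.mk_mem_edges_of_mem_zip_support {G : SimpleGraph V} {u v : V} (p : G.Walk u v)
    {a : V × V} (ha : a ∈ p.support.zip p.support.tail) : s(a.1, a.2) ∈ p.edges := by
  rw [Walk.edges_eq_zipWith_support, ← List.map_uncurry_zip_eq_zipWith]
  exact List.mem_map_of_mem ha

lemma biArcs_diff_eq_biArcs_deleteEdges (G : SimpleGraph V) (E' : Set (Sym2 V)) :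
    biArcs G \ {a : V × V | s(a.1, a.2) ∈ E'} = biArcs (G.deleteEdges E') := by
  ext a
  simp [biArcs, deleteEdges_adj]

lemma exists_isPath_support_eq_of_isDiPath {G : SimpleGraph V} {s t : V} {q : List V}
    (hq : IsDiPath (biArcs G) s t q) : ∃ w : G.Walk s t, w.IsPath ∧ w.support = q := by
  obtain ⟨hhead, hlast, hchain, hnodup⟩ := hq
  have hne : q ≠ [] := by rintro rfl; simp at hhead
  have hadj : q.IsChain G.Adj := hchain
  refine ⟨(Walk.ofSupport q hne hadj).copy ?_ ?_, ?_, ?_⟩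
  · exact (List.head_eq_iff_head?_eq_some hne).2 hhead
  · exact (List.getLast_eq_iff_getLast?_eq_some hne).2 hlast
  · simpa [Walk.isPath_def] using hnodup
  · simp

end SimpleGraph

theorem stmt10_general {V : Type*} (G : SimpleGraph V) (s t : V)
    (pstar : G.Walk s t)
    (E' : Set (Sym2 V)) (hsol : FPCSol G pstar E') :
    DiFPCSol (biArcs G) s t pstar.support {a : V × V | Sym2.mk a.1 a.2 ∈ E'} := by
  obtain ⟨hcut_sub, hcut_avoid, hshortest⟩ := hsol
  refine ⟨fun a ha => hcut_sub ha,
    fun a ha => hcut_avoid _ (pstar.mk_mem_edges_of_mem_zip_support ha), ?_⟩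
  intro q hq hne
  rw [SimpleGraph.biArcs_diff_eq_biArcs_deleteEdges] at hq
  obtain ⟨w, hw, rfl⟩ := SimpleGraph.exists_isPath_support_eq_of_isDiPath hq
  have hw_ne : w.mapLe (G.deleteEdges_le E') ≠ pstar := fun h =>
    hne (by rw [← h, SimpleGraph.Walk.support_mapLe_eq_support])
  have := hshortest w hw hw_ne
  rw [SimpleGraph.Walk.length_support, SimpleGraph.Walk.length_support]
  omega

/-- If `E'` is an undirected Force Path Cut solution for `(G, p*)`,
then the arc set `{(u,v), (v,u) : {u,v} ∈ E'}` is a directed Force Path Cut solution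
for the bidirected version of `G` with target directed path `p*`. -/
theorem stmt10 {V : Type*} (G : SimpleGraph V) (s t : V) (hst : s ≠ t)
    (pstar : G.Walk s t) (hpstar : pstar.IsPath)
    (E' : Set (Sym2 V)) (hsol : FPCSol G pstar E') :
    DiFPCSol (biArcs G) s t pstar.support {a : V × V | Sym2.mk a.1 a.2 ∈ E'} :=
  stmt10_general G s t pstar E' hsol
end

section
/- Let G=(V,E) be an undirected unweighted graph with an s–t path p*, and let Ĝ be its bidirected version with p* regarded as a directed path using forward arcs. Then the minimum size of a directed Force Path Cut solution for (Ĝ,p*) equals the minimum size of an undirected Force Path Cut solution for (G,p*) (assuming an undirected solution exists). -/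
namespace Stmt11Aux

open List

variable {V : Type*}

/-- Directed walk from `s` to `t` given by its vertex list. -/
def DW (A : Set (V × V)) (s t : V) (l : List V) : Prop :=
  l.head? = some s ∧ l.getLast? = some t ∧ l.Chain' (fun u v => (u, v) ∈ A)

lemma DW.ne_nil {A : Set (V × V)} {s t : V} {l : List V} (h : DW A s t l) : l ≠ [] := by
  rintro rfl; simp [DW] at h

lemma DW.length_pos {A : Set (V × V)} {s t : V} {l : List V} (h : DW A s t l) :
    0 < l.length := by
  cases l with
  | nil => exact absurd rfl h.ne_nil
  | cons a l => simp

lemma dw_single {A : Set (V × V)} (s : V) : DW A s s [s] := ⟨rfl, rfl, List.isChain_singleton s⟩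

lemma dw_pair {A : Set (V × V)} {u v : V} (h : (u, v) ∈ A) : DW A u v [u, v] := by
  refine ⟨rfl, rfl, ?_⟩
  simp [List.Chain', List.isChain_cons_cons, h]

lemma DW.append {A : Set (V × V)} {s u t : V} {l₁ l₂ : List V}
    (h₁ : DW A s u l₁) (h₂ : DW A u t l₂) : DW A s t (l₁ ++ l₂.tail) := by
  obtain ⟨h1h, h1l, h1c⟩ := h₁
  obtain ⟨h2h, h2l, h2c⟩ := h₂
  cases l₂ with
  | nil => simp at h2h
  | cons b r =>
    obtain rfl : b = u := by simpa using h2h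
    cases r with
    | nil =>
      obtain rfl : b = t := by simpa using h2l
      simpa using ⟨h1h, h1l, h1c⟩
    | cons c r' =>
      have hlast : (c :: r').getLast? = some t := h2l
      refine ⟨?_, ?_, ?_⟩
      · cases l₁ with
        | nil => simp at h1h
        | cons a l₁' => simpa using h1h
      · simp only [List.tail_cons]
        rw [List.getLast?_append, hlast]
        rfl
      · simp only [List.tail_cons]
        show List.IsChain _ _
        rw [List.isChain_append]
        refine ⟨h1c, h2c.tail, ?_⟩
        intro x hx y hy
        rw [h1l] at hx
        obtain rfl : b = x := by simpa using hx
        simp only [List.head?_cons, Option.mem_some_iff] at hy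
        subst hy
        exact (List.isChain_cons_cons.1 h2c).1

lemma DW.reverse {A : Set (V × V)} {s t : V} {l : List V} (h : DW A s t l) :
    DW {a : V × V | (a.2, a.1) ∈ A} t s l.reverse := by
  obtain ⟨hh, hl, hc⟩ := h
  refine ⟨?_, ?_, ?_⟩
  · rw [List.head?_reverse]; exact hl
  · rw [List.getLast?_reverse]; exact hh
  · show List.IsChain _ _
    rw [List.isChain_reverse]
    exact hc.imp (fun a b hab => hab)

lemma swap_swap (A : Set (V × V)) :
    {a : V × V | (a.2, a.1) ∈ {b : V × V | (b.2, b.1) ∈ A}} = A := by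
  ext ⟨x, y⟩; simp


lemma chainElem {R : V → V → Prop} {l : List V} :
    l.Chain' R ↔ ∀ (i : ℕ) (h : i + 1 < l.length), R (l[i]'(by omega)) (l[i+1]'h) := by
  show List.IsChain R l ↔ _
  rw [List.isChain_iff_getElem]

lemma DW.take {A : Set (V × V)} {s t : V} {l : List V} (h : DW A s t l)
    {i : ℕ} (hi : i < l.length) : DW A s (l[i]'hi) (l.take (i+1)) := by
  obtain ⟨hh, hl, hc⟩ := h
  refine ⟨?_, ?_, hc.take _⟩
  · rw [List.head?_take, if_neg (by omega)]; exact hh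
  · rw [List.getLast?_take, if_neg (by omega)]
    simp only [Nat.add_sub_cancel]
    rw [List.getElem?_eq_getElem hi]
    rfl

lemma DW.drop {A : Set (V × V)} {s t : V} {l : List V} (h : DW A s t l)
    {i : ℕ} (hi : i < l.length) : DW A (l[i]'hi) t (l.drop i) := by
  obtain ⟨hh, hl, hc⟩ := h
  refine ⟨?_, ?_, hc.drop _⟩
  · rw [List.head?_drop, List.getElem?_eq_getElem hi]
  · rw [List.getLast?_drop, if_neg (by omega)]; exact hl

lemma DW.cut {A : Set (V × V)} {s t : V} {l : List V} (h : DW A s t l)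
    {i j : ℕ} (hij : i < j) (hj : j < l.length) (he : l[i]'(by omega) = l[j]'hj) :
    DW A s t (l.take (i+1) ++ (l.drop j).tail) := by
  have h₁ : DW A s (l[i]'(by omega)) (l.take (i+1)) := h.take (by omega)
  have h₂ : DW A (l[j]'hj) t (l.drop j) := h.drop hj
  rw [he] at h₁
  exact h₁.append h₂

lemma DW.prune {A : Set (V × V)} {s t : V} :
    ∀ (n : ℕ) (l : List V), l.length ≤ n → DW A s t l →
      ∃ l', DW A s t l' ∧ l'.Nodup ∧ l'.length ≤ l.length := by
  intro n
  induction n with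
  | zero => intro l hl h; exact absurd (List.length_eq_zero_iff.1 (by omega)) h.ne_nil
  | succ n ih =>
    intro l hl h
    by_cases hnd : l.Nodup
    · exact ⟨l, h, hnd, le_rfl⟩
    · rw [List.nodup_iff_injective_get] at hnd
      rw [Function.not_injective_iff] at hnd
      obtain ⟨a, b, hab, hne⟩ := hnd
      -- wlog a < b
      obtain ⟨i, j, hij, hj, he⟩ : ∃ (i j : ℕ) (hij : i < j) (hj : j < l.length),
          l[i]'(by omega) = l[j]'hj := by
        rcases lt_or_gt_of_ne (Fin.val_ne_of_ne hne) with hlt | hgt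
        · exact ⟨a.1, b.1, hlt, b.2, by simpa using hab⟩
        · exact ⟨b.1, a.1, hgt, a.2, by simpa using hab.symm⟩
      have hcut := h.cut hij hj he
      have hlen : (l.take (i+1) ++ (l.drop j).tail).length ≤ n := by
        simp only [List.length_append, List.length_take, List.length_tail, List.length_drop]
        omega
      obtain ⟨l', hl', hnd', hle'⟩ := ih _ hlen hcut
      refine ⟨l', hl', hnd', le_trans hle' ?_⟩
      simp only [List.length_append, List.length_take, List.length_tail, List.length_drop]
      omega


/-! distance machinery -/

lemma enat_ne_top_of_le_coe {a : ℕ∞} {m : ℕ} (h : a ≤ (m : ℕ∞)) : a ≠ ⊤ :=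
  (h.trans_lt (WithTop.coe_lt_top m)).ne

open scoped Classical in
noncomputable def dd (A : Set (V × V)) (s x : V) : ℕ∞ :=
  if ∃ l, DW A s x l then ((sInf {n : ℕ | ∃ l, DW A s x l ∧ l.length = n + 1} : ℕ) : ℕ∞)
  else ⊤

lemma dd_le {A : Set (V × V)} {s x : V} {l : List V} (h : DW A s x l) :
    dd A s x + 1 ≤ (l.length : ℕ∞) := by
  classical
  rw [dd, if_pos ⟨l, h⟩]
  have h1 : 0 < l.length := h.length_pos
  have hmem : l.length - 1 ∈ {n : ℕ | ∃ l', DW A s x l' ∧ l'.length = n + 1} := ⟨l, h, by omega⟩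
  have h2 := Nat.sInf_le hmem
  have h3 : sInf {n : ℕ | ∃ l', DW A s x l' ∧ l'.length = n + 1} + 1 ≤ l.length := by omega
  exact_mod_cast h3

lemma dd_spec {A : Set (V × V)} {s x : V} (h : dd A s x ≠ ⊤) :
    ∃ (n : ℕ) (l : List V), dd A s x = (n : ℕ∞) ∧ DW A s x l ∧ l.length = n + 1 := by
  classical
  by_cases he : ∃ l, DW A s x l
  · obtain ⟨l0, hl0⟩ := he
    have hmem : l0.length - 1 ∈ {n : ℕ | ∃ l', DW A s x l' ∧ l'.length = n + 1} :=
      ⟨l0, hl0, by have := hl0.length_pos; omega⟩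
    obtain ⟨l, hl, hlen⟩ := Nat.sInf_mem (⟨_, hmem⟩ :
      {n : ℕ | ∃ l', DW A s x l' ∧ l'.length = n + 1}.Nonempty)
    exact ⟨_, l, by rw [dd, if_pos ⟨l0, hl0⟩], hl, hlen⟩
  · rw [dd, if_neg he] at h; exact absurd rfl h

lemma dd_self {A : Set (V × V)} (s : V) : dd A s s = 0 := by
  have h := dd_le (A := A) (dw_single s)
  simp only [List.length_singleton, Nat.cast_one] at h
  have hne : dd A s s ≠ ⊤ :=
    enat_ne_top_of_le_coe (m := 1) (le_trans le_self_add (by exact_mod_cast h))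
  lift dd A s s to ℕ using hne with n hn
  have h2 : (n : ℕ) + 1 ≤ 1 := by exact_mod_cast h
  exact_mod_cast (by omega : n = 0)

lemma dd_step {A : Set (V × V)} {s u v : V} (h : (u, v) ∈ A) :
    dd A s v ≤ dd A s u + 1 := by
  by_cases hu : dd A s u = ⊤
  · rw [hu]; simp
  · obtain ⟨n, l, hdd, hl, hlen⟩ := dd_spec hu
    have hwalk : DW A s v (l ++ [v]) := by
      have := hl.append (dw_pair h)
      simpa using this
    have hle : dd A s v + 1 ≤ ((n + 2 : ℕ) : ℕ∞) := by
      have h1 := dd_le hwalk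
      have h2 : (l ++ [v]).length = n + 2 := by simp [hlen]
      rw [h2] at h1
      exact h1
    have hne : dd A s v ≠ ⊤ :=
      enat_ne_top_of_le_coe (le_trans le_self_add hle)
    lift dd A s v to ℕ using hne with m hm
    rw [hdd]
    have h2 : (m : ℕ) + 1 ≤ n + 2 := by exact_mod_cast hle
    exact_mod_cast (by omega : m ≤ n + 1)

lemma dd_ge {A : Set (V × V)} {s t : V} {L : ℕ}
    (hmin : ∀ l, DW A s t l → L + 1 ≤ l.length) : (L : ℕ∞) ≤ dd A s t := by
  by_cases h : dd A s t = ⊤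
  · rw [h]; exact le_top
  · obtain ⟨n, l, hdd, hl, hlen⟩ := dd_spec h
    rw [hdd]
    have := hmin l hl
    exact_mod_cast (by omega : L ≤ n)

lemma dd_sum {A : Set (V × V)} {s t : V} {L : ℕ}
    (hmin : ∀ l, DW A s t l → L + 1 ≤ l.length) (x : V) :
    (L : ℕ∞) ≤ dd A s x + dd {a : V × V | (a.2, a.1) ∈ A} t x := by
  by_cases h1 : dd A s x = ⊤
  · rw [h1]; simp
  by_cases h2 : dd {a : V × V | (a.2, a.1) ∈ A} t x = ⊤
  · rw [h2]; simp
  obtain ⟨n₁, l₁, hdd₁, hl₁, hlen₁⟩ := dd_spec h1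
  obtain ⟨n₂, l₂, hdd₂, hl₂, hlen₂⟩ := dd_spec h2
  have hrev : DW A x t l₂.reverse := by
    have := hl₂.reverse
    rwa [swap_swap] at this
  have happ := hl₁.append hrev
  have hm := hmin _ happ
  rw [List.length_append, List.length_tail, List.length_reverse, hlen₁, hlen₂] at hm
  rw [hdd₁, hdd₂]
  exact_mod_cast (by omega : L ≤ n₁ + n₂)

lemma stepwise (f : V → ℕ∞) (l : List V) (h0 : ∀ h : 0 < l.length, f (l[0]'h) ≤ 0)
    (hs : ∀ (i : ℕ) (h : i + 1 < l.length), f (l[i+1]'h) ≤ f (l[i]'(by omega)) + 1) :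
    ∀ (i : ℕ) (h : i < l.length), f (l[i]'h) ≤ (i : ℕ∞) := by
  intro i
  induction i with
  | zero => intro h; simpa using h0 h
  | succ n ih =>
    intro h
    calc f (l[n+1]'h) ≤ f (l[n]'(by omega)) + 1 := hs n h
    _ ≤ (n : ℕ∞) + 1 := add_le_add_left (ih (by omega)) 1
    _ = ((n+1 : ℕ) : ℕ∞) := by push_cast; rfl


/-! bridge to SimpleGraph walks -/

open SimpleGraph

lemma mem_zip_tail {l : List V} {i : ℕ} (h : i + 1 < l.length) :
    (l[i]'(by omega), l[i+1]'h) ∈ l.zip l.tail := by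
  have hlen : i < (l.zip l.tail).length := by
    rw [List.length_zip, List.length_tail]; omega
  have : (l.zip l.tail)[i]'hlen = (l[i]'(by omega), l[i+1]'h) := by
    rw [List.getElem_zip]
    congr 1
    exact List.getElem_tail _
  rw [← this]
  exact List.getElem_mem hlen

lemma walk_to_DW {G : SimpleGraph V} {s t : V} (w : G.Walk s t) :
    DW {a : V × V | G.Adj a.1 a.2} s t w.support := by
  refine ⟨?_, ?_, ?_⟩
  · rw [w.support_eq_cons]; rfl
  · rw [List.getLast?_eq_getLast (w.support_ne_nil)]
    simp
  · exact w.isChain_adj_support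

lemma exists_walk {G : SimpleGraph V} :
    ∀ (l : List V) (s t : V), DW {a : V × V | G.Adj a.1 a.2} s t l →
      ∃ w : G.Walk s t, w.support = l
  | [], _, _, h => absurd rfl h.ne_nil
  | [a], s, t, h => by
      obtain ⟨hh, hl, _⟩ := h
      have h1 : a = s := by simpa using hh
      have h2 : a = t := by simpa using hl
      subst h1; subst h2
      exact ⟨SimpleGraph.Walk.nil, rfl⟩
  | a :: b :: r, s, t, h => by
      obtain ⟨hh, hl, hc⟩ := h
      have h1 : a = s := by simpa using hh
      subst h1
      have hadj : G.Adj a b := (List.isChain_cons_cons.1 hc).1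
      have htl : DW {a : V × V | G.Adj a.1 a.2} b t (b :: r) :=
        ⟨rfl, by simpa using hl, (List.isChain_cons_cons.1 hc).2⟩
      obtain ⟨w, hw⟩ := exists_walk (b :: r) b t htl
      exact ⟨SimpleGraph.Walk.cons hadj w, by simp [hw]⟩

lemma support_inj {G : SimpleGraph V} {s t : V} :
    ∀ {w₁ w₂ : G.Walk s t}, w₁.support = w₂.support → w₁ = w₂ := by
  intro w₁
  induction w₁ with
  | nil =>
    intro w₂ h
    cases w₂ with
    | nil => rfl
    | cons h' p =>
      exfalso
      have hl := congrArg List.length h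
      simp [SimpleGraph.Walk.length_support] at hl
  | @cons u v w hadj p ih =>
    intro w₂ h
    cases w₂ with
    | nil =>
      exfalso
      have hl := congrArg List.length h
      simp [SimpleGraph.Walk.length_support] at hl
    | @cons _ v₂ _ hadj₂ p₂ =>
      rw [SimpleGraph.Walk.support_cons, SimpleGraph.Walk.support_cons] at h
      have h2 : p.support = p₂.support := by injection h
      have hv : v = v₂ := by
        have e1 : p.support.head? = some v := by rw [p.support_eq_cons]; rfl
        have e2 : p₂.support.head? = some v₂ := by rw [p₂.support_eq_cons]; rfl
        rw [h2, e2] at e1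
        exact (Option.some_inj.1 e1).symm
      subst hv
      rw [ih h2]

lemma edges_eq_map_zip {G : SimpleGraph V} {s t : V} (w : G.Walk s t) :
    w.edges = (w.support.zip w.support.tail).map (fun a => s(a.1, a.2)) := by
  induction w with
  | nil => simp
  | @cons u v x hadj p ih =>
    rw [SimpleGraph.Walk.edges_cons, SimpleGraph.Walk.support_cons, ih]
    conv_lhs => rw [p.support_eq_cons, List.tail_cons]
    conv_rhs => rw [List.tail_cons, p.support_eq_cons, List.zip_cons_cons, List.map_cons]

lemma zip_mem_edges {G : SimpleGraph V} {s t : V} {w : G.Walk s t} {a : V × V}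
    (h : a ∈ w.support.zip w.support.tail) : s(a.1, a.2) ∈ w.edges := by
  rw [edges_eq_map_zip]
  exact List.mem_map_of_mem h

lemma edges_index {G : SimpleGraph V} {s t : V} {w : G.Walk s t} {e : Sym2 V}
    (h : e ∈ w.edges) :
    ∃ (j : ℕ) (hj : j + 1 < w.support.length),
      e = s(w.support[j]'(by omega), w.support[j+1]'hj) := by
  rw [edges_eq_map_zip] at h
  obtain ⟨a, ha, rfl⟩ := List.mem_map.1 h
  obtain ⟨i, hi, hig⟩ := List.mem_iff_getElem.1 ha
  have hi' : i + 1 < w.support.length := by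
    rw [List.length_zip, List.length_tail] at hi; omega
  refine ⟨i, hi', ?_⟩
  rw [← hig]
  simp [List.getElem_zip]

lemma mapLe_support {G G' : SimpleGraph V} (hle : G ≤ G') {s t : V} (w : G.Walk s t) :
    (w.mapLe hle).support = w.support := by
  rw [SimpleGraph.Walk.mapLe, SimpleGraph.Walk.support_map]
  exact List.map_id' w.support


lemma enat_lt_of_lt {a b : ℕ∞} (h : a + 1 < b) : a < b :=
  lt_of_le_of_lt le_self_add h

open SimpleGraph in
lemma dir_of_undir [Finite V] {G : SimpleGraph V} {s t : V}
    {pstar : G.Walk s t} {E' : Set (Sym2 V)} (hE : FPCSol G pstar E') :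
    ∃ Ehat : Set (V × V), DiFPCSol (biArcs G) s t pstar.support Ehat ∧
      Set.ncard Ehat ≤ Set.ncard E' := by
  classical
  obtain ⟨hE1, hE2, hE3⟩ := hE
  set H := G.deleteEdges E' with hH
  set AH : Set (V × V) := {a : V × V | H.Adj a.1 a.2} with hAH
  set L : ℕ := pstar.length with hL
  have hmin : ∀ l, DW AH s t l → L + 1 ≤ l.length := by
    intro l hl
    obtain ⟨l', hl', hnd, hle⟩ := DW.prune l.length l le_rfl hl
    obtain ⟨w, hw⟩ := exists_walk l' s t hl'
    have hwp : w.IsPath := by rw [SimpleGraph.Walk.isPath_def, hw]; exact hnd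
    have hws : w.support.length = w.length + 1 := w.length_support
    rw [hw] at hws
    by_cases hmap : w.mapLe (SimpleGraph.deleteEdges_le E') = pstar
    · have hlen : w.length = L := by
        rw [hL, ← hmap]
        simp [SimpleGraph.Walk.mapLe, SimpleGraph.Walk.length_map]
      omega
    · have := hE3 w hwp hmap
      omega
  have hswapAH : {a : V × V | (a.2, a.1) ∈ AH} = AH := by
    ext ⟨x, y⟩
    simp only [hAH, Set.mem_setOf_eq]
    exact SimpleGraph.adj_comm H y x
  have hsum : ∀ x, (L : ℕ∞) ≤ dd AH s x + dd AH t x := by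
    intro x
    have := dd_sum hmin x
    rwa [hswapAH] at this
  set φ : V → ℕ∞ := dd AH s with hφ
  set ψ : V → ℕ∞ := dd AH t with hψ
  set Ehat : Set (V × V) :=
    {a : V × V | s(a.1, a.2) ∈ E' ∧
      (φ a.1 + 1 + ψ a.2 ≤ (L : ℕ∞) ∨ φ a.1 + 1 < φ a.2)} with hEhatdef
  have hnotboth : ∀ u v : V, (u, v) ∈ Ehat → (v, u) ∈ Ehat → False := by
    rintro u v ⟨he₁, hc₁⟩ ⟨he₂, hc₂⟩
    simp only at hc₁ hc₂
    have hsu := hsum u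
    have hsv := hsum v
    rcases hc₁ with hA₁ | hB₁ <;> rcases hc₂ with hA₂ | hB₂
    · have f1 : φ u ≠ ⊤ := enat_ne_top_of_le_coe (le_trans (by rw [add_assoc]; exact le_self_add) hA₁)
      have f2 : ψ v ≠ ⊤ := enat_ne_top_of_le_coe (le_trans le_add_self hA₁)
      have f3 : φ v ≠ ⊤ := enat_ne_top_of_le_coe (le_trans (by rw [add_assoc]; exact le_self_add) hA₂)
      have f4 : ψ u ≠ ⊤ := enat_ne_top_of_le_coe (le_trans le_add_self hA₂)
      lift φ u to ℕ using f1 with au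
      lift ψ v to ℕ using f2 with cv
      lift φ v to ℕ using f3 with av
      lift ψ u to ℕ using f4 with cu
      have g1 : au + 1 + cv ≤ L := by exact_mod_cast hA₁
      have g2 : av + 1 + cu ≤ L := by exact_mod_cast hA₂
      have g3 : L ≤ au + cu := by exact_mod_cast hsu
      have g4 : L ≤ av + cv := by exact_mod_cast hsv
      omega
    · -- A₁ : φ u + 1 + ψ v ≤ L, B₂ : φ v + 1 < φ u
      have f1 : φ u ≠ ⊤ := enat_ne_top_of_le_coe (le_trans (by rw [add_assoc]; exact le_self_add) hA₁)
      have f2 : ψ v ≠ ⊤ := enat_ne_top_of_le_coe (le_trans le_add_self hA₁)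
      have f3 : φ v ≠ ⊤ := by
        intro htop
        rw [htop] at hB₂
        exact (not_top_lt (lt_of_le_of_lt le_top hB₂)) -- ⊤ + 1 < φ u impossible
      lift φ u to ℕ using f1 with au
      lift ψ v to ℕ using f2 with cv
      lift φ v to ℕ using f3 with av
      have g1 : au + 1 + cv ≤ L := by exact_mod_cast hA₁
      have g2 : av + 1 < au := by exact_mod_cast hB₂
      have g4 : L ≤ av + cv := by exact_mod_cast hsv
      omega
    · -- B₁ : φ u + 1 < φ v, A₂ : φ v + 1 + ψ u ≤ L
      have f3 : φ v ≠ ⊤ := enat_ne_top_of_le_coe (le_trans (by rw [add_assoc]; exact le_self_add) hA₂)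
      have f4 : ψ u ≠ ⊤ := enat_ne_top_of_le_coe (le_trans le_add_self hA₂)
      have f1 : φ u ≠ ⊤ := by
        intro htop
        rw [htop] at hB₁
        exact (not_top_lt (lt_of_le_of_lt le_top hB₁))
      lift φ v to ℕ using f3 with av
      lift ψ u to ℕ using f4 with cu
      lift φ u to ℕ using f1 with au
      have g1 : av + 1 + cu ≤ L := by exact_mod_cast hA₂
      have g2 : au + 1 < av := by exact_mod_cast hB₁
      have g3 : L ≤ au + cu := by exact_mod_cast hsu
      omega
    · exact absurd (lt_trans (enat_lt_of_lt hB₁) (enat_lt_of_lt hB₂)) (lt_irrefl _)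
  refine ⟨Ehat, ⟨?_, ?_, ?_⟩, ?_⟩
  · -- Ehat ⊆ biArcs G
    rintro ⟨x, y⟩ ⟨he, -⟩
    exact (SimpleGraph.mem_edgeSet G).1 (hE1 he)
  · -- avoids arcs of pstar
    rintro a ha ⟨he, -⟩
    exact hE2 _ (zip_mem_edges ha) he
  · -- main property
    intro q hq hneq
    by_contra hcon
    push_neg at hcon
    have hpsl : pstar.support.length = L + 1 := pstar.length_support
    rw [hpsl] at hcon
    obtain ⟨hqh, hqt, hqc, hqn⟩ := hq
    have hq0 : 0 < q.length := by
      cases q with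
      | nil => simp at hqh
      | cons a l => simp
    have hq0e : q[0]'hq0 = s := by
      rw [List.head?_eq_getElem?, List.getElem?_eq_getElem hq0] at hqh
      simpa using hqh
    have hqte : q[q.length - 1]'(by omega) = t := by
      rw [List.getLast?_eq_getElem?, List.getElem?_eq_getElem (by omega : q.length - 1 < q.length)] at hqt
      simpa using hqt
    have harc : ∀ (i : ℕ) (h : i + 1 < q.length),
        (q[i]'(by omega), q[i+1]'h) ∈ biArcs G \ Ehat := chainElem.1 hqc
    have hstep : ∀ (i : ℕ) (h : i + 1 < q.length),
        φ (q[i+1]'h) ≤ φ (q[i]'(by omega)) + 1 := by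
      intro i h
      obtain ⟨hbi, hnot⟩ := harc i h
      by_cases he : s(q[i]'(by omega), q[i+1]'h) ∈ E'
      · have hno : ¬(φ (q[i]'(by omega)) + 1 + ψ (q[i+1]'h) ≤ (L:ℕ∞) ∨
            φ (q[i]'(by omega)) + 1 < φ (q[i+1]'h)) := fun hc => hnot ⟨he, hc⟩
        exact le_of_not_gt (fun hlt => hno (Or.inr hlt))
      · refine dd_step ?_
        rw [hAH, Set.mem_setOf_eq, hH]
        rw [SimpleGraph.deleteEdges_adj]
        exact ⟨hbi, he⟩
    have hφi : ∀ (i : ℕ) (h : i < q.length), φ (q[i]'h) ≤ (i : ℕ∞) := by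
      refine stepwise φ q (fun h => ?_) hstep
      rw [hq0e, hφ, dd_self]
    set P : ℕ → Prop := fun i => ∃ h : i + 1 < q.length,
      s(q[i]'(by omega), q[i+1]'h) ∈ E' with hPdef
    by_cases hPe : ∃ i, P i
    · obtain ⟨i₀, hPi₀, hmax⟩ : ∃ i₀, P i₀ ∧ ∀ j, P j → j ≤ i₀ := by
        obtain ⟨i, hi⟩ := hPe
        obtain ⟨hilt, himem⟩ := hi
        have hTne : ((Finset.range q.length).filter P).Nonempty :=
          ⟨i, by
            simp only [Finset.mem_filter, Finset.mem_range]
            exact ⟨by omega, ⟨hilt, himem⟩⟩⟩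
        refine ⟨((Finset.range q.length).filter P).max' hTne, ?_, ?_⟩
        · have hm := Finset.max'_mem _ hTne
          simp only [Finset.mem_filter] at hm
          exact hm.2
        · intro j hj
          refine Finset.le_max' _ j ?_
          simp only [Finset.mem_filter, Finset.mem_range]
          obtain ⟨h', hm⟩ := hj
          exact ⟨by omega, ⟨h', hm⟩⟩
      obtain ⟨hi₀, hE'arc⟩ := hPi₀
      have hsurv : (q[i₀]'(by omega), q[i₀+1]'hi₀) ∉ Ehat := (harc i₀ hi₀).2
      have hnA : ¬(φ (q[i₀]'(by omega)) + 1 + ψ (q[i₀+1]'hi₀) ≤ (L : ℕ∞)) :=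
        fun hc => hsurv ⟨hE'arc, Or.inl hc⟩
      have hdw : DW (biArcs G \ Ehat) s t q := ⟨hqh, hqt, hqc⟩
      have hd := hdw.drop (show i₀ + 1 < q.length by omega)
      have hsuf : DW AH (q[i₀+1]'hi₀) t (q.drop (i₀+1)) := by
        obtain ⟨h1, h2, h3⟩ := hd
        refine ⟨h1, h2, ?_⟩
        rw [chainElem] at h3 ⊢
        intro k hk
        have hk' : (i₀ + 1) + (k + 1) < q.length := by
          have h5 := hk; rw [List.length_drop] at h5; omega
        have e1 : (q.drop (i₀+1))[k]'(by omega) = q[i₀+1+k]'(by omega) :=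
          List.getElem_drop
        have e2 : (q.drop (i₀+1))[k+1]'hk = q[i₀+1+(k+1)]'hk' := List.getElem_drop
        have hj : (i₀+1+k) + 1 < q.length := by omega
        have hnemem : s(q[i₀+1+k]'(by omega), q[(i₀+1+k)+1]'hj) ∉ E' := by
          intro hmem
          have hPj : P (i₀+1+k) := ⟨hj, hmem⟩
          have := hmax _ hPj
          omega
        rw [e1, e2]
        show (q[i₀+1+k]'(by omega), q[(i₀+1+k)+1]'hj) ∈ AH
        rw [hAH, Set.mem_setOf_eq, hH, SimpleGraph.deleteEdges_adj]
        exact ⟨(harc (i₀+1+k) hj).1, hnemem⟩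
      have hrev := hsuf.reverse
      rw [hswapAH] at hrev
      have hψb := dd_le hrev
      rw [List.length_reverse, List.length_drop, ← hψ] at hψb
      have hφ₀ := hφi i₀ (by omega)
      apply hnA
      have fψ : ψ (q[i₀+1]'hi₀) ≠ ⊤ :=
        enat_ne_top_of_le_coe (le_trans le_self_add hψb)
      have fφ : φ (q[i₀]'(by omega)) ≠ ⊤ := enat_ne_top_of_le_coe hφ₀
      lift φ (q[i₀]'(by omega)) to ℕ using fφ with a
      lift ψ (q[i₀+1]'hi₀) to ℕ using fψ with c
      have g1 : a ≤ i₀ := by exact_mod_cast hφ₀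
      have g2 : c + 1 ≤ q.length - (i₀ + 1) := by exact_mod_cast hψb
      have : a + 1 + c ≤ L := by omega
      exact_mod_cast this
    · have hAHw : DW AH s t q := by
        refine ⟨hqh, hqt, ?_⟩
        rw [chainElem]
        intro i h
        have hnemem : s(q[i]'(by omega), q[i+1]'h) ∉ E' := fun hmem => hPe ⟨i, h, hmem⟩
        show (q[i]'(by omega), q[i+1]'h) ∈ AH
        rw [hAH, Set.mem_setOf_eq, hH, SimpleGraph.deleteEdges_adj]
        exact ⟨(harc i h).1, hnemem⟩
      obtain ⟨w, hw⟩ := exists_walk q s t hAHw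
      have hwp : w.IsPath := by rw [SimpleGraph.Walk.isPath_def, hw]; exact hqn
      have hws : w.support.length = w.length + 1 := w.length_support
      rw [hw] at hws
      by_cases hmap : w.mapLe (SimpleGraph.deleteEdges_le E') = pstar
      · refine hneq ?_
        rw [← hw, ← mapLe_support (SimpleGraph.deleteEdges_le E') w, hmap]
      · have := hE3 w hwp hmap
        omega
  · -- cardinality
    have himg : Sym2.mk.uncurry '' Ehat ⊆ E' := by
      rintro e ⟨⟨x, y⟩, ⟨he, -⟩, rfl⟩
      exact he
    have hinj : Set.InjOn Sym2.mk.uncurry Ehat := by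
      rintro ⟨x, y⟩ hxy ⟨x', y'⟩ hxy' heq
      rcases Sym2.mk_eq_mk_iff.1 heq with h | h
      · exact h
      · rw [Prod.ext_iff] at h
        simp only [Prod.swap] at h
        obtain ⟨rfl, rfl⟩ := h
        exact absurd hxy' (fun hc => hnotboth _ _ hxy hc)
    calc Ehat.ncard = (Sym2.mk.uncurry '' Ehat).ncard := (Set.ncard_image_of_injOn hinj).symm
    _ ≤ E'.ncard := Set.ncard_le_ncard himg (Set.toFinite E')


open SimpleGraph in
lemma undir_of_dir [Finite V] {G : SimpleGraph V} {s t : V}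
    {pstar : G.Walk s t} (hpstar : pstar.IsPath) {Ehat : Set (V × V)}
    (hE : DiFPCSol (biArcs G) s t pstar.support Ehat) :
    ∃ E' : Set (Sym2 V), FPCSol G pstar E' ∧ Set.ncard E' ≤ Set.ncard Ehat := by
  classical
  obtain ⟨h1, h2, h3⟩ := hE
  set D : Set (V × V) := biArcs G \ Ehat with hD
  set E' : Set (Sym2 V) := (Sym2.mk.uncurry '' Ehat) \ {e | e ∈ pstar.edges} with hE'def
  set L : ℕ := pstar.length with hL
  have hpsl : pstar.support.length = L + 1 := by rw [hL]; exact pstar.length_support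
  have hpschain := pstar.isChain_adj_support
  have harcps : ∀ (j : ℕ) (hj : j + 1 < pstar.support.length),
      (pstar.support[j]'(by omega), pstar.support[j+1]'hj) ∈ D := by
    intro j hj
    constructor
    · exact chainElem.1 hpschain j hj
    · exact h2 _ (mem_zip_tail hj)
  have hpsD : DW D s t pstar.support := by
    refine ⟨?_, ?_, ?_⟩
    · rw [pstar.support_eq_cons]; rfl
    · rw [List.getLast?_eq_getLast pstar.support_ne_nil]; simp
    · rw [chainElem]; intro i h; exact harcps i h
  have hmin : ∀ l, DW D s t l → L + 1 ≤ l.length := by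
    intro l hl
    obtain ⟨l', hl', hnd, hle⟩ := DW.prune l.length l le_rfl hl
    by_cases heq : l' = pstar.support
    · have : l'.length = L + 1 := by rw [heq, hpsl]
      omega
    · have := h3 l' ⟨hl'.1, hl'.2.1, hl'.2.2, hnd⟩ heq
      rw [hpsl] at this
      omega
  set φ : V → ℕ∞ := dd D s with hφ
  set ψ : V → ℕ∞ := dd {a : V × V | (a.2, a.1) ∈ D} t with hψ
  have hsum : ∀ x, (L : ℕ∞) ≤ φ x + ψ x := by
    intro x; rw [hφ, hψ]; exact dd_sum hmin x
  have hφt : (L : ℕ∞) ≤ φ t := by rw [hφ]; exact dd_ge hmin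
  have hprefix : ∀ (j : ℕ) (hj : j + 1 < pstar.support.length),
      φ (pstar.support[j]'(by omega)) + 1 ≤ ((j + 1 : ℕ) : ℕ∞) := by
    intro j hj
    rw [hφ]
    have h' := dd_le (hpsD.take (show j < pstar.support.length by omega))
    rw [List.length_take, min_eq_left (by omega : j + 1 ≤ pstar.support.length)] at h'
    exact h'
  have hsuffix : ∀ (j : ℕ) (hj : j < pstar.support.length),
      ψ (pstar.support[j]'hj) + 1 ≤ ((pstar.support.length - j : ℕ) : ℕ∞) := by
    intro j hj
    rw [hψ]
    have h' := dd_le (hpsD.drop hj).reverse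
    rwa [List.length_reverse, List.length_drop] at h'
  refine ⟨E', ⟨?_, ?_, ?_⟩, ?_⟩
  · rintro e ⟨⟨⟨x, y⟩, hxy, rfl⟩, -⟩
    exact (SimpleGraph.mem_edgeSet G).2 (h1 hxy)
  · intro e he hmem
    exact hmem.2 he
  · intro q' hq' hne
    by_contra hcon
    push_neg at hcon
    set q : List V := q'.support with hq
    have hqlen : q.length = q'.length + 1 := by rw [hq]; exact q'.length_support
    have hqn : q.Nodup := hq'.support_nodup
    obtain ⟨hqh, hqt, hqc⟩ := walk_to_DW q'
    have harcq := chainElem.1 hqc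
    have hq0 : 0 < q.length := by omega
    have hq0e : q[0]'hq0 = s := by
      rw [List.head?_eq_getElem?, List.getElem?_eq_getElem hq0] at hqh
      simpa using hqh
    have hqte : q[q.length - 1]'(by omega) = t := by
      rw [List.getLast?_eq_getElem?,
        List.getElem?_eq_getElem (by omega : q.length - 1 < q.length)] at hqt
      simpa using hqt
    have hstep : ∀ (i : ℕ) (h : i + 1 < q.length),
        φ (q[i+1]'h) ≤ φ (q[i]'(by omega)) + 1 ∧
          ((q[i]'(by omega), q[i+1]'h) ∉ D →
            φ (q[i+1]'h) + 2 ≤ φ (q[i]'(by omega)) + 1) := by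
      intro i h
      have hadj : (G.deleteEdges E').Adj (q[i]'(by omega)) (q[i+1]'h) := harcq i h
      rw [SimpleGraph.deleteEdges_adj] at hadj
      obtain ⟨hGadj, hnotE'⟩ := hadj
      by_cases hDm : (q[i]'(by omega), q[i+1]'h) ∈ D
      · exact ⟨by rw [hφ]; exact dd_step hDm, fun hc => absurd hDm hc⟩
      · have hEhatm : (q[i]'(by omega), q[i+1]'h) ∈ Ehat := by
          by_contra hc
          exact hDm ⟨hGadj, hc⟩
        have himg : s(q[i]'(by omega), q[i+1]'h) ∈ Sym2.mk.uncurry '' Ehat := ⟨_, hEhatm, rfl⟩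
        have hedge : s(q[i]'(by omega), q[i+1]'h) ∈ pstar.edges := by
          by_contra hc
          exact hnotE' ⟨himg, hc⟩
        obtain ⟨j, hj, hjeq⟩ := edges_index hedge
        rcases (Sym2.mk_eq_mk_iff (p := (_, _)) (q := (_, _))).1 hjeq with hor | hor
        · exfalso
          apply hDm
          rw [Prod.ext_iff] at hor
          obtain ⟨hu, hv⟩ := hor
          simp only at hu hv
          rw [hu, hv]
          exact harcps j hj
        · rw [Prod.ext_iff] at hor
          obtain ⟨hu, hv⟩ := hor
          simp only [Prod.fst_swap, Prod.snd_swap] at hu hv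
          -- hu : q[i] = ps[j+1], hv : q[i+1] = ps[j]
          have hb1 : φ (q[i+1]'h) + 1 ≤ ((j + 1 : ℕ) : ℕ∞) := by
            rw [hv]; exact hprefix j hj
          have hb2 : ψ (q[i]'(by omega)) + 1 ≤
              ((pstar.support.length - (j+1) : ℕ) : ℕ∞) := by
            rw [hu]; exact hsuffix (j+1) hj
          by_cases hfu : φ (q[i]'(by omega)) = ⊤
          · constructor
            · rw [hfu]; simp
            · intro _; rw [hfu]; simp
          · have hsumu := hsum (q[i]'(by omega))
            have fψ : ψ (q[i]'(by omega)) ≠ ⊤ :=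
              enat_ne_top_of_le_coe (le_trans le_self_add hb2)
            have fφv : φ (q[i+1]'h) ≠ ⊤ :=
              enat_ne_top_of_le_coe (le_trans le_self_add hb1)
            lift φ (q[i]'(by omega)) to ℕ using hfu with a
            lift φ (q[i+1]'h) to ℕ using fφv with b
            lift ψ (q[i]'(by omega)) to ℕ using fψ with c
            have g1 : b + 1 ≤ j + 1 := by exact_mod_cast hb1
            have g2 : c + 1 ≤ pstar.support.length - (j+1) := by exact_mod_cast hb2
            have g3 : L ≤ a + c := by exact_mod_cast hsumu
            constructor
            · exact_mod_cast (by omega : b ≤ a + 1)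
            · intro _
              exact_mod_cast (by omega : b + 2 ≤ a + 1)
    have hφi : ∀ (i : ℕ) (h : i < q.length), φ (q[i]'h) ≤ (i : ℕ∞) := by
      refine stepwise φ q (fun h => ?_) (fun i h => (hstep i h).1)
      rw [hq0e, hφ, dd_self]
    by_cases hrev : ∃ (i : ℕ) (h : i + 1 < q.length), (q[i]'(by omega), q[i+1]'h) ∉ D
    · obtain ⟨i₀, hi₀, hnotD⟩ := hrev
      have hprop : ∀ (k : ℕ), i₀ + 1 ≤ k → ∀ (hk : k < q.length),
          φ (q[k]'hk) + 2 ≤ (k : ℕ∞) := by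
        intro k
        induction k with
        | zero => intro hge; omega
        | succ m ih =>
          intro hge hk
          by_cases hm : i₀ + 1 ≤ m
          · have hstep' := (hstep m hk).1
            have ihm := ih hm (by omega)
            calc φ (q[m+1]'hk) + 2 ≤ (φ (q[m]'(by omega)) + 1) + 2 := by
                  exact add_le_add_left hstep' 2
            _ = (φ (q[m]'(by omega)) + 2) + 1 := by ring
            _ ≤ ((m : ℕ∞) + 1) := by
                  have := add_le_add_left ihm 1
                  exact this
            _ = ((m + 1 : ℕ) : ℕ∞) := by push_cast; ring
          · have hmeq : m = i₀ := by omega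
            subst hmeq
            have h2' := (hstep m hk).2 hnotD
            have hb := hφi m (by omega)
            calc φ (q[m+1]'hk) + 2 ≤ φ (q[m]'(by omega)) + 1 := h2'
            _ ≤ (m : ℕ∞) + 1 := add_le_add_left hb 1
            _ = ((m + 1 : ℕ) : ℕ∞) := by push_cast; ring
      have hfinal := hprop (q.length - 1) (by omega) (by omega)
      rw [hqte] at hfinal
      have fφt : φ t ≠ ⊤ := enat_ne_top_of_le_coe (le_trans le_self_add hfinal)
      lift φ t to ℕ using fφt with a
      have g1 : L ≤ a := by exact_mod_cast hφt
      have g2 : a + 2 ≤ q.length - 1 := by exact_mod_cast hfinal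
      omega
    · push_neg at hrev
      have hqD : IsDiPath (biArcs G \ Ehat) s t q := by
        refine ⟨hqh, hqt, ?_, hqn⟩
        rw [chainElem]
        intro i h
        exact hrev i h
      have hqne : q ≠ pstar.support := by
        intro hqeq
        apply hne
        apply support_inj
        rw [mapLe_support (SimpleGraph.deleteEdges_le E') q']
        rw [← hq]
        exact hqeq
      have := h3 q hqD hqne
      rw [hpsl] at this
      omega
  · calc E'.ncard ≤ (Sym2.mk.uncurry '' Ehat).ncard :=
        Set.ncard_le_ncard Set.diff_subset (Set.toFinite _)
    _ ≤ Ehat.ncard := Set.ncard_image_le (Set.toFinite _)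

end Stmt11Aux

/-- The minimum size of a directed Force Path Cut solution for the
bidirected version of `G` with target directed path `p*` equals the minimum size of an
undirected Force Path Cut solution for `(G, p*)` (assuming an undirected solution
exists). -/
theorem stmt11 {V : Type*} [Fintype V] (G : SimpleGraph V) (s t : V) (hst : s ≠ t)
    (pstar : G.Walk s t) (hpstar : pstar.IsPath)
    (hex : ∃ E' : Set (Sym2 V), FPCSol G pstar E') :
    sInf {n : ℕ | ∃ Ehat : Set (V × V),
        DiFPCSol (biArcs G) s t pstar.support Ehat ∧ Ehat.ncard = n}
      = sInf {n : ℕ | ∃ E' : Set (Sym2 V), FPCSol G pstar E' ∧ E'.ncard = n} := by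
  classical
  obtain ⟨E0, hE0⟩ := hex
  have hundne : {n : ℕ | ∃ E' : Set (Sym2 V), FPCSol G pstar E' ∧ E'.ncard = n}.Nonempty :=
    ⟨E0.ncard, E0, hE0, rfl⟩
  obtain ⟨Eh0, hEh0, hle0⟩ := Stmt11Aux.dir_of_undir hE0
  have hdirne : {n : ℕ | ∃ Ehat : Set (V × V),
      DiFPCSol (biArcs G) s t pstar.support Ehat ∧ Ehat.ncard = n}.Nonempty :=
    ⟨Eh0.ncard, Eh0, hEh0, rfl⟩
  apply le_antisymm
  · obtain ⟨E', hE', hcard⟩ := Nat.sInf_mem hundne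
    obtain ⟨Ehat, hEhat, hle⟩ := Stmt11Aux.dir_of_undir hE'
    exact le_trans (Nat.sInf_le ⟨Ehat, hEhat, rfl⟩) (by omega)
  · obtain ⟨Ehat, hEhat, hcard⟩ := Nat.sInf_mem hdirne
    obtain ⟨E', hE', hle⟩ := Stmt11Aux.undir_of_dir hpstar hEhat
    exact le_trans (Nat.sInf_le ⟨E', hE', rfl⟩) (by omega)
end

section
/- Let G=(V,E) be an undirected graph with edge weights w:E→ℝ≥0, and let p* be an s–t path with vertex set V(p*). There exists a vertex set V' ⊆ V∖V(p*) such that p* is strictly shorter than every other s–t path in the subgraph of G induced on V∖V' if and only if p* is strictly shorter than every other s–t path in the subgraph of G induced on V(p*). -/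
/-- The total weight of a walk: the sum of the weights of its edges. -/
def walkWeight {V : Type*} {G : SimpleGraph V} (w : Sym2 V → ℝ) {u v : V}
    (p : G.Walk u v) : ℝ :=
  (p.edges.map w).sum

/-- After removing the vertex set `V'` from `G` (modelled by deleting every edge
incident to a vertex of `V'`, which leaves exactly the subgraph induced on the
complement of `V'` as far as `s`–`t` paths are concerned), the path `p` is strictly
shorter than every other path between its endpoints. -/
def StrictlyShortestAfterRemoval {V : Type*} (G : SimpleGraph V) (w : Sym2 V → ℝ)
    {s t : V} (p : G.Walk s t) (V' : Set V) : Prop :=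
  ∀ q : (G.deleteEdges {e : Sym2 V | ∃ v ∈ V', v ∈ e}).Walk s t, q.IsPath →
    q.mapLe (SimpleGraph.deleteEdges_le _) ≠ p → walkWeight w p < walkWeight w q

lemma walkWeight_mapLe {V : Type*} {G G' : SimpleGraph V} (h : G ≤ G') (w : Sym2 V → ℝ)
    {u v : V} (p : G.Walk u v) : walkWeight w (p.mapLe h) = walkWeight w p := by
  simp only [walkWeight, SimpleGraph.Walk.mapLe, SimpleGraph.Walk.edges_map,
    SimpleGraph.Hom.ofLE_apply]
  congr 1
  rw [List.map_map]
  congr 1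
  funext e
  simp [Sym2.map_id']

/-- There exists a vertex set `V' ⊆ V ∖ V(p*)` whose removal makes
`p*` strictly shorter than every other `s`–`t` path (i.e. a Force Path Remove solution
exists) iff `p*` is strictly shorter than every other `s`–`t` path in the subgraph of
`G` induced on the vertex set `V(p*)` of `p*` (i.e. after removing all vertices not on
`p*`). -/
theorem stmt13 {V : Type*} (G : SimpleGraph V) (w : Sym2 V → ℝ) (hw : ∀ e, 0 ≤ w e)
    (s t : V) (hst : s ≠ t) (pstar : G.Walk s t) (hpstar : pstar.IsPath) :
    (∃ V' : Set V, (∀ v ∈ V', v ∉ pstar.support) ∧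
        StrictlyShortestAfterRemoval G w pstar V') ↔
      StrictlyShortestAfterRemoval G w pstar {v : V | v ∉ pstar.support} := by
  constructor
  · rintro ⟨V', hsub, h⟩ q hq hne
    have hss : {e : Sym2 V | ∃ v ∈ V', v ∈ e} ⊆
        {e : Sym2 V | ∃ v ∈ {v : V | v ∉ pstar.support}, v ∈ e} := by
      rintro e ⟨v, hv, hve⟩
      exact ⟨v, hsub v hv, hve⟩
    have hle := SimpleGraph.deleteEdges_anti (G := G) hss
    have key := h (q.mapLe hle) (hq.mapLe _)
    rw [walkWeight_mapLe] at key
    have hcomp : (q.mapLe hle).mapLe (SimpleGraph.deleteEdges_le _) =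
        q.mapLe (SimpleGraph.deleteEdges_le _) := by
      simp only [SimpleGraph.Walk.mapLe, SimpleGraph.Walk.map_map]
      rfl
    rw [hcomp] at key
    exact key hne
  · intro h
    exact ⟨{v : V | v ∉ pstar.support}, fun v hv => hv, h⟩
end
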